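/- arXiv:1803.05326 — 9 statements merged into one kernel-verified Lean document; each statement's English description precedes it below -/
import Mathlib

section
/- Let X and Y be compact Hausdorff spaces and let σ : X → X and τ : Y → Y be topologically transitive homeomorphisms. Suppose there exist decompositions X = X₁ ⊔ X₂ and Y = Y₁ ⊔ Y₂ into disjoint open invariant sets such that σ restricted to X₁ is conjugate to τ restricted to Y₁ and σ restricted to X₂ is conjugate to τ⁻¹ restricted to Y₂. Then σ and τ are flip-conjugate. -/
open Set

/-- Homeomorphisms `σ` and `τ` are conjugate if there is a homeomorphism `h : X → Y`
with `τ ∘ h = h ∘ σ`. -/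
def Conjugate {X Y : Type*} [TopologicalSpace X] [TopologicalSpace Y]
    (σ : X ≃ₜ X) (τ : Y ≃ₜ Y) : Prop :=
  ∃ h : X ≃ₜ Y, ∀ x : X, h (σ x) = τ (h x)

/-- `σ` and `τ` are flip-conjugate if `σ` is conjugate to `τ` or to `τ⁻¹`. -/
def FlipConjugate {X Y : Type*} [TopologicalSpace X] [TopologicalSpace Y]
    (σ : X ≃ₜ X) (τ : Y ≃ₜ Y) : Prop :=
  Conjugate σ τ ∨ Conjugate σ τ.symm

/-- The restriction of `σ` to `S` is conjugate to the restriction of `τ` to `T`: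
there is a homeomorphism `h : S → T` (subspace topologies) with `τ ∘ h = h ∘ σ` on `S`. -/
def ConjugateOn {X Y : Type*} [TopologicalSpace X] [TopologicalSpace Y]
    (σ : X ≃ₜ X) (τ : Y ≃ₜ Y) (S : Set X) (T : Set Y) : Prop :=
  ∃ h : S ≃ₜ T, ∀ x : S, ∃ hx : σ (x : X) ∈ S, ((h ⟨σ (x : X), hx⟩ : Y)) = τ (h x)

/-- `σ` is topologically transitive: some point has dense two-sided orbit. -/
def TopTransitive {X : Type*} [TopologicalSpace X] (σ : X ≃ₜ X) : Prop :=
  ∃ x : X, Dense {y : X | ∃ n : ℤ, y = (σ.toEquiv ^ n) x}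

/-!
A transitive homeomorphism admits no nontrivial splitting into two open invariant sets:
the part containing a point with dense orbit contains the whole orbit, so it is dense, and it
is closed because its complement is open. Hence both decompositions are trivial, and the two
nonempty pieces must correspond (a conjugacy of restrictions matches empty with empty);
so `σ` is conjugate to `τ` or to `τ⁻¹` on all of `X`.
-/

open scoped Pointwise in
lemma Equiv.Perm.zpow_apply_mem_of_image_eq {α : Type*} {e : Equiv.Perm α} {S : Set α}
    (hS : e '' S = S) (n : ℤ) {x : α} (hx : x ∈ S) : (e ^ n) x ∈ S := by
  have he : e ∈ MulAction.stabilizer (Equiv.Perm α) S := by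
    rwa [MulAction.mem_stabilizer_iff, ← Set.image_smul]
  have hen := MulAction.mem_stabilizer_iff.mp ((MulAction.stabilizer _ S).zpow_mem he n)
  exact hen ▸ Set.smul_mem_smul_set hx

section Transitive

variable {X : Type*} [TopologicalSpace X] {σ : X ≃ₜ X}

lemma eq_univ_of_dense_orbit_of_mem {x : X}
    (hx : Dense {y : X | ∃ n : ℤ, y = (σ.toEquiv ^ n) x}) {S : Set X}
    (hiS : σ '' S = S) (hS : IsClosed S) (hxS : x ∈ S) : S = univ := by
  have horbit : {y : X | ∃ n : ℤ, y = (σ.toEquiv ^ n) x} ⊆ S := by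
    rintro _ ⟨n, rfl⟩
    exact Equiv.Perm.zpow_apply_mem_of_image_eq hiS n hxS
  rw [← hS.closure_eq, ← dense_iff_closure_eq]
  exact hx.mono horbit

lemma TopTransitive.eq_univ_or_eq_univ (hσ : TopTransitive σ) {S T : Set X}
    (hd : Disjoint S T) (hu : S ∪ T = univ) (hS : IsOpen S) (hT : IsOpen T)
    (hiS : σ '' S = S) (hiT : σ '' T = T) : S = univ ∨ T = univ := by
  have hcompl : IsCompl S T := ⟨hd, codisjoint_iff.mpr hu⟩
  obtain ⟨x, hx⟩ := hσ
  rcases (hu ▸ mem_univ x : x ∈ S ∪ T) with hxS | hxT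
  · refine .inl (eq_univ_of_dense_orbit_of_mem hx hiS ?_ hxS)
    exact hcompl.symm.compl_eq ▸ hT.isClosed_compl
  · refine .inr (eq_univ_of_dense_orbit_of_mem hx hiT ?_ hxT)
    exact hcompl.compl_eq ▸ hS.isClosed_compl

end Transitive

section ConjugateOn

variable {X Y : Type*} [TopologicalSpace X] [TopologicalSpace Y] {σ : X ≃ₜ X} {τ : Y ≃ₜ Y}
  {S : Set X} {T : Set Y}

lemma ConjugateOn.nonempty (hc : ConjugateOn σ τ S T) (hS : S.Nonempty) : T.Nonempty :=
  let ⟨h, _⟩ := hc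
  let ⟨x, hx⟩ := hS
  ⟨h ⟨x, hx⟩, (h ⟨x, hx⟩).2⟩

lemma ConjugateOn.conjugate_of_eq_univ (hc : ConjugateOn σ τ S T) (hS : S = univ)
    (hT : T = univ) : Conjugate σ τ := by
  subst hS hT
  obtain ⟨h, hh⟩ := hc
  exact ⟨(Homeomorph.Set.univ X).symm.trans (h.trans (Homeomorph.Set.univ Y)),
    fun x => (hh ⟨x, trivial⟩).2⟩

end ConjugateOn

theorem stmt0_general {X Y : Type*} [TopologicalSpace X]
    [TopologicalSpace Y]
    (σ : X ≃ₜ X) (τ : Y ≃ₜ Y)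
    (hσ : TopTransitive σ) (hτ : TopTransitive τ)
    (X₁ X₂ : Set X) (Y₁ Y₂ : Set Y)
    (hXd : Disjoint X₁ X₂) (hXu : X₁ ∪ X₂ = univ)
    (hYd : Disjoint Y₁ Y₂) (hYu : Y₁ ∪ Y₂ = univ)
    (hX₁ : IsOpen X₁) (hX₂ : IsOpen X₂) (hY₁ : IsOpen Y₁) (hY₂ : IsOpen Y₂)
    (hiX₁ : σ '' X₁ = X₁) (hiX₂ : σ '' X₂ = X₂)
    (hiY₁ : τ '' Y₁ = Y₁) (hiY₂ : τ '' Y₂ = Y₂)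
    (hc₁ : ConjugateOn σ τ X₁ Y₁) (hc₂ : ConjugateOn σ τ.symm X₂ Y₂) :
    FlipConjugate σ τ := by
  have ⟨x, _⟩ := hσ
  rcases hσ.eq_univ_or_eq_univ hXd hXu hX₁ hX₂ hiX₁ hiX₂ with hX | hX <;>
    rcases hτ.eq_univ_or_eq_univ hYd hYu hY₁ hY₂ hiY₁ hiY₂ with hY | hY
  · exact .inl (hc₁.conjugate_of_eq_univ hX hY)
  · have hY₁e : Y₁ = ∅ := hYd.eq_bot_of_le (hY ▸ subset_univ Y₁)
    exact absurd hY₁e (hc₁.nonempty ⟨x, hX ▸ mem_univ x⟩).ne_empty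
  · have hY₂e : Y₂ = ∅ := hYd.symm.eq_bot_of_le (hY ▸ subset_univ Y₂)
    exact absurd hY₂e (hc₂.nonempty ⟨x, hX ▸ mem_univ x⟩).ne_empty
  · exact .inr (hc₂.conjugate_of_eq_univ hX hY)

theorem stmt0 {X Y : Type*} [TopologicalSpace X] [CompactSpace X] [T2Space X]
    [TopologicalSpace Y] [CompactSpace Y] [T2Space Y]
    (σ : X ≃ₜ X) (τ : Y ≃ₜ Y)
    (hσ : TopTransitive σ) (hτ : TopTransitive τ)
    (X₁ X₂ : Set X) (Y₁ Y₂ : Set Y)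
    (hXd : Disjoint X₁ X₂) (hXu : X₁ ∪ X₂ = univ)
    (hYd : Disjoint Y₁ Y₂) (hYu : Y₁ ∪ Y₂ = univ)
    (hX₁ : IsOpen X₁) (hX₂ : IsOpen X₂) (hY₁ : IsOpen Y₁) (hY₂ : IsOpen Y₂)
    (hiX₁ : σ '' X₁ = X₁) (hiX₂ : σ '' X₂ = X₂)
    (hiY₁ : τ '' Y₁ = Y₁) (hiY₂ : τ '' Y₂ = Y₂)
    (hc₁ : ConjugateOn σ τ X₁ Y₁) (hc₂ : ConjugateOn σ τ.symm X₂ Y₂) :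
    FlipConjugate σ τ :=
  stmt0_general σ τ hσ hτ X₁ X₂ Y₁ Y₂ hXd hXu hYd hYu hX₁ hX₂ hY₁ hY₂ hiX₁ hiX₂ hiY₁ hiY₂ hc₁ hc₂
end

section
/- Let X be a compact Hausdorff space, σ : X → X a homeomorphism, and f : ℤ × X → ℤ a map such that: for each n ∈ ℤ the map x ↦ f(n,x) is continuous; f(m+n, x) = f(m,x) + f(n, σᵐ(x)) for all m,n ∈ ℤ and x ∈ X; for each x ∈ X the map n ↦ f(n,x) is a bijection of ℤ; and for each n ∈ ℤ the map sending x to the unique m with f(m,x) = n is continuous. Then there is a positive integer N such that the sets X₁ := {x ∈ X : f(n,x) > 0 and f(−n,x) < 0 for all n > N} and X₂ := {x ∈ X : f(n,x) < 0 and f(−n,x) > 0 for all n > N} are open, satisfy σ(X₁) = X₁ and σ(X₂) = X₂, are disjoint, and X = X₁ ∪ X₂ (so X₁ and X₂ are clopen σ-invariant sets partitioning X). -/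
/-!
Continuous integer-valued functions on the compact space `X` are bounded, so the increments
`f (n + 1, x) - f (n, x) = f (1, σⁿ x)` (and their backward analogues) are bounded by some `C`
uniformly in `x`. Continuity of the inverses `g m` bounds the set of times `n` at which
`|f (n, x)| ≤ C`, so beyond some `N` the orbit values dominate the increments and cannot change
sign. Since `f (·, x)` is onto `ℤ`, its signs at `+∞` and `-∞` must differ, so each of the two sets
is cut out by the sign of the continuous function `f (N + 1, ·)`. These sets are `σ`-invariant
because `f (n, σ x) = f (1 + n, x) - f (1, x)` differs from `f (1 + n, x)` by at most `C`.
-/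

open Set Function

lemma pos_iff_pos_of_abs_sub_lt_abs {a b : ℤ} (h : |b - a| < |a|) : 0 < b ↔ 0 < a := by
  rcases abs_lt.mp h with ⟨h1, h2⟩
  cases abs_cases a <;> omega

lemma pos_iff_pos_of_forall_abs_sub_lt_abs {u : ℤ → ℤ} {a : ℤ}
    (h : ∀ n, a ≤ n → |u (n + 1) - u n| < |u n|) {n : ℤ} (hn : a ≤ n) :
    0 < u n ↔ 0 < u a := by
  induction n, hn using Int.leInduction with
  | base => rfl
  | succ n hn ih => exact (pos_iff_pos_of_abs_sub_lt_abs (h n hn)).trans ih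

namespace Function.Surjective

variable {u : ℤ → ℤ}

lemma not_forall_pos_of_lt_abs (hu : Surjective u) (M : ℤ) : ¬ ∀ n, M < |n| → 0 < u n := by
  intro hpos
  have hneg : Iio 0 ⊆ u '' Icc (-M) M := by
    rintro v (hv : v < 0)
    obtain ⟨n, rfl⟩ := hu v
    refine ⟨n, ?_, rfl⟩
    by_contra hn
    have := hpos n (by rw [mem_Icc, ← abs_le] at hn; omega)
    omega
  exact Iio_infinite 0 (((finite_Icc (-M) M).image u).subset hneg)

variable {M : ℤ} (hfwd : ∀ n, M < n → |u (n + 1) - u n| < |u n|)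
  (hbwd : ∀ n, M < n → |u (-(n + 1)) - u (-n)| < |u (-n)|)
include hfwd hbwd

lemma forall_pos_neg_iff (hu : Surjective u) :
    (∀ n, M < n → 0 < u n ∧ u (-n) < 0) ↔ 0 < u (M + 1) := by
  refine ⟨fun h => (h (M + 1) (by omega)).1, fun hM n hn => ?_⟩
  have hright : ∀ n, M < n → (0 < u n ↔ 0 < u (M + 1)) := fun n hn =>
    pos_iff_pos_of_forall_abs_sub_lt_abs hfwd hn
  have hleft : ∀ n, M < n → (0 < u (-n) ↔ 0 < u (-(M + 1))) := fun n hn =>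
    pos_iff_pos_of_forall_abs_sub_lt_abs (u := fun n => u (-n)) hbwd hn
  have hleft_nonpos : ¬ 0 < u (-(M + 1)) := fun hM' =>
    hu.not_forall_pos_of_lt_abs M fun k hk => by
      rcases lt_abs.mp hk with hk | hk
      · exact (hright k hk).2 hM
      · simpa using (hleft (-k) hk).2 hM'
  have hne : u (-n) ≠ 0 := fun h0 => by simpa [h0] using (abs_nonneg _).trans_lt (hbwd n hn)
  exact ⟨(hright n hn).2 hM,
    lt_of_le_of_ne (not_lt.mp fun h => hleft_nonpos ((hleft n hn).1 h)) hne⟩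

lemma forall_neg_pos_iff (hu : Surjective u) :
    (∀ n, M < n → u n < 0 ∧ 0 < u (-n)) ↔ u (M + 1) < 0 := by
  have h := (neg_surjective.comp hu).forall_pos_neg_iff (u := fun n => -u n)
    (fun n hn => by simpa only [neg_sub_neg, abs_sub_comm, abs_neg] using hfwd n hn)
    (fun n hn => by simpa only [neg_sub_neg, abs_sub_comm, abs_neg] using hbwd n hn)
  simpa only [neg_pos, neg_lt_zero, and_comm] using h

end Function.Surjective

lemma Function.Surjective.image_eq_of_isCompl {α : Type*} {e : α → α} (he : Surjective e)
    {A B : Set α} (hAB : IsCompl A B) (hA : e '' A ⊆ A) (hB : e '' B ⊆ B) : e '' A = A := by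
  refine hA.antisymm fun y hy => ?_
  obtain ⟨x, rfl⟩ := he y
  refine ⟨x, ?_, rfl⟩
  by_contra hx
  exact disjoint_left.mp hAB.disjoint hy (hB ⟨x, hAB.compl_eq ▸ hx, rfl⟩)

lemma isCompl_setOf_pos_setOf_neg {α : Type*} {u : α → ℤ} (hu : ∀ x, u x ≠ 0) :
    IsCompl {x | 0 < u x} {x | u x < 0} :=
  ⟨disjoint_left.mpr fun x (h : 0 < u x) (h' : u x < 0) => lt_asymm h h',
    codisjoint_iff.mpr (eq_univ_of_forall fun x => (hu x).lt_or_gt.symm)⟩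

lemma exists_lt_abs_apply_of_lt_abs {X : Type*} [TopologicalSpace X] [CompactSpace X]
    {f : ℤ × X → ℤ} {g : ℤ → X → ℤ} (hinj : ∀ x, Injective fun n => f (n, x))
    (hg : ∀ n x, f (g n x, x) = n) (hgc : ∀ n, Continuous (g n)) (K : ℤ) :
    ∃ N : ℕ, 0 < N ∧ ∀ n x, (N : ℤ) < |n| → K < |f (n, x)| := by
  obtain ⟨M, hM⟩ : BddAbove (⋃ m ∈ Icc (-K) K, range fun x => |g m x|) :=
    (finite_Icc _ _).bddAbove_biUnion.mpr fun m _ => (isCompact_range (hgc m).abs).bddAbove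
  refine ⟨M.toNat + 1, by omega, fun n x hn => lt_of_not_ge fun hK => ?_⟩
  have hgn : g (f (n, x)) x = n := hinj x (hg _ x)
  have : |n| ≤ M := hM (mem_biUnion (abs_le.mp hK) ⟨x, congrArg abs hgn⟩)
  omega

def IsCocycle {X : Type*} (τ : Equiv.Perm X) (f : ℤ × X → ℤ) : Prop :=
  ∀ (m n : ℤ) (x : X), f (m + n, x) = f (m, x) + f (n, (τ ^ m) x)

namespace IsCocycle

variable {X : Type*} {τ : Equiv.Perm X} {f : ℤ × X → ℤ}

lemma apply_add_one_sub (hf : IsCocycle τ f) (n : ℤ) (x : X) :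
    f (n + 1, x) - f (n, x) = f (1, (τ ^ n) x) := by
  rw [hf]; ring

lemma apply_neg_add_one_sub (hf : IsCocycle τ f) (n : ℤ) (x : X) :
    f (-(n + 1), x) - f (-n, x) = f (-1, (τ ^ (-n)) x) := by
  rw [neg_add, hf]; ring

lemma apply_perm (hf : IsCocycle τ f) (n : ℤ) (x : X) :
    f (n, τ x) = f (1 + n, x) - f (1, x) := by
  rw [hf, zpow_one]; ring

lemma pos_apply_perm (hf : IsCocycle τ f) {n : ℤ} {x : X} (h : |f (1, x)| < |f (1 + n, x)|)
    (hpos : 0 < f (1 + n, x)) : 0 < f (n, τ x) := by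
  rw [abs_of_pos hpos] at h
  rw [hf.apply_perm]
  linarith [le_abs_self (f (1, x))]

lemma neg_apply_perm (hf : IsCocycle τ f) {n : ℤ} {x : X} (h : |f (1, x)| < |f (1 + n, x)|)
    (hneg : f (1 + n, x) < 0) : f (n, τ x) < 0 := by
  rw [abs_of_neg hneg] at h
  rw [hf.apply_perm]
  linarith [neg_abs_le (f (1, x))]

variable {x : X} {C N : ℤ} (h1 : ∀ y, |f (1, y)| ≤ C) (h2 : ∀ y, |f (-1, y)| ≤ C)
  (hN : ∀ n, N < |n| → C < |f (n, x)|)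
include h1 h2 hN

lemma abs_step_lt (hf : IsCocycle τ f) :
    (∀ n, N < n → |f (n + 1, x) - f (n, x)| < |f (n, x)|) ∧
      ∀ n, N < n → |f (-(n + 1), x) - f (-n, x)| < |f (-n, x)| :=
  ⟨fun n hn => hf.apply_add_one_sub n x ▸ (h1 _).trans_lt (hN n (lt_abs.mpr (.inl hn))),
    fun n hn => hf.apply_neg_add_one_sub n x ▸
      (h2 _).trans_lt (hN (-n) (lt_abs.mpr (.inr (by rwa [neg_neg]))))⟩

lemma forall_pos_neg_iff (hf : IsCocycle τ f) (hx : Surjective fun n => f (n, x)) :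
    (∀ n, N < n → 0 < f (n, x) ∧ f (-n, x) < 0) ↔ 0 < f (N + 1, x) :=
  hx.forall_pos_neg_iff (hf.abs_step_lt h1 h2 hN).1 (hf.abs_step_lt h1 h2 hN).2

lemma forall_neg_pos_iff (hf : IsCocycle τ f) (hx : Surjective fun n => f (n, x)) :
    (∀ n, N < n → f (n, x) < 0 ∧ 0 < f (-n, x)) ↔ f (N + 1, x) < 0 :=
  hx.forall_neg_pos_iff (hf.abs_step_lt h1 h2 hN).1 (hf.abs_step_lt h1 h2 hN).2

end IsCocycle

theorem stmt2_general {X : Type*} [TopologicalSpace X] [CompactSpace X]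
    (σ : X ≃ₜ X) (f : ℤ × X → ℤ)
    (hfc : ∀ n : ℤ, Continuous fun x => f (n, x))
    (hcoc : ∀ (m n : ℤ) (x : X), f (m + n, x) = f (m, x) + f (n, (σ.toEquiv ^ m) x))
    (hbij : ∀ x : X, Function.Bijective fun n : ℤ => f (n, x))
    (g : ℤ → X → ℤ)
    (hg : ∀ (n : ℤ) (x : X), f (g n x, x) = n)
    (hgc : ∀ n : ℤ, Continuous fun x => g n x) :
    ∃ N : ℕ, 0 < N ∧
      IsOpen {x : X | ∀ n : ℤ, (N : ℤ) < n → 0 < f (n, x) ∧ f (-n, x) < 0} ∧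
      IsOpen {x : X | ∀ n : ℤ, (N : ℤ) < n → f (n, x) < 0 ∧ 0 < f (-n, x)} ∧
      σ '' {x : X | ∀ n : ℤ, (N : ℤ) < n → 0 < f (n, x) ∧ f (-n, x) < 0}
        = {x : X | ∀ n : ℤ, (N : ℤ) < n → 0 < f (n, x) ∧ f (-n, x) < 0} ∧
      σ '' {x : X | ∀ n : ℤ, (N : ℤ) < n → f (n, x) < 0 ∧ 0 < f (-n, x)}
        = {x : X | ∀ n : ℤ, (N : ℤ) < n → f (n, x) < 0 ∧ 0 < f (-n, x)} ∧
      Disjoint {x : X | ∀ n : ℤ, (N : ℤ) < n → 0 < f (n, x) ∧ f (-n, x) < 0}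
        {x : X | ∀ n : ℤ, (N : ℤ) < n → f (n, x) < 0 ∧ 0 < f (-n, x)} ∧
      {x : X | ∀ n : ℤ, (N : ℤ) < n → 0 < f (n, x) ∧ f (-n, x) < 0}
        ∪ {x : X | ∀ n : ℤ, (N : ℤ) < n → f (n, x) < 0 ∧ 0 < f (-n, x)} = univ := by
  have hf : IsCocycle σ.toEquiv f := hcoc
  obtain ⟨C, hC⟩ := (isCompact_range ((hfc 1).abs.max (hfc (-1)).abs)).bddAbove
  have h1 : ∀ y, |f (1, y)| ≤ C := fun y => (le_max_left _ _).trans (hC ⟨y, rfl⟩)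
  have h2 : ∀ y, |f (-1, y)| ≤ C := fun y => (le_max_right _ _).trans (hC ⟨y, rfl⟩)
  obtain ⟨N, hN0, hN⟩ := exists_lt_abs_apply_of_lt_abs (fun x => (hbij x).1) hg hgc C
  have hA : {x : X | ∀ n : ℤ, (N : ℤ) < n → 0 < f (n, x) ∧ f (-n, x) < 0} =
      {x | 0 < f (N + 1, x)} := ext fun x => hf.forall_pos_neg_iff h1 h2 (hN · x) (hbij x).2
  have hB : {x : X | ∀ n : ℤ, (N : ℤ) < n → f (n, x) < 0 ∧ 0 < f (-n, x)} =
      {x | f (N + 1, x) < 0} := ext fun x => hf.forall_neg_pos_iff h1 h2 (hN · x) (hbij x).2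
  have hfar : ∀ x, C < |f (1 + (N + 1), x)| := fun x => hN _ x (lt_abs.mpr (.inl (by omega)))
  have hAB : IsCompl {x | 0 < f (N + 1, x)} {x | f (N + 1, x) < 0} :=
    isCompl_setOf_pos_setOf_neg fun x => abs_pos.mp <|
      (abs_nonneg _).trans_lt ((h1 x).trans_lt (hN _ x (lt_abs.mpr (.inl (by omega)))))
  have hσA : σ '' {x | 0 < f (N + 1, x)} ⊆ {x | 0 < f (N + 1, x)} := by
    rintro _ ⟨x, hx, rfl⟩
    rw [← hA] at hx
    exact hf.pos_apply_perm ((h1 x).trans_lt (hfar x)) (hx _ (by omega)).1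
  have hσB : σ '' {x | f (N + 1, x) < 0} ⊆ {x | f (N + 1, x) < 0} := by
    rintro _ ⟨x, hx, rfl⟩
    rw [← hB] at hx
    exact hf.neg_apply_perm ((h1 x).trans_lt (hfar x)) (hx _ (by omega)).1
  refine ⟨N, hN0, ?_⟩
  rw [hA, hB]
  exact ⟨isOpen_lt continuous_const (hfc _), isOpen_lt (hfc _) continuous_const,
    σ.surjective.image_eq_of_isCompl hAB hσA hσB,
    σ.surjective.image_eq_of_isCompl hAB.symm hσB hσA, hAB.disjoint, hAB.sup_eq_top⟩

theorem stmt2 {X : Type*} [TopologicalSpace X] [CompactSpace X] [T2Space X]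
    (σ : X ≃ₜ X) (f : ℤ × X → ℤ)
    (hfc : ∀ n : ℤ, Continuous fun x => f (n, x))
    (hcoc : ∀ (m n : ℤ) (x : X), f (m + n, x) = f (m, x) + f (n, (σ.toEquiv ^ m) x))
    (hbij : ∀ x : X, Function.Bijective fun n : ℤ => f (n, x))
    (g : ℤ → X → ℤ)
    (hg : ∀ (n : ℤ) (x : X), f (g n x, x) = n)
    (hgc : ∀ n : ℤ, Continuous fun x => g n x) :
    ∃ N : ℕ, 0 < N ∧
      IsOpen {x : X | ∀ n : ℤ, (N : ℤ) < n → 0 < f (n, x) ∧ f (-n, x) < 0} ∧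
      IsOpen {x : X | ∀ n : ℤ, (N : ℤ) < n → f (n, x) < 0 ∧ 0 < f (-n, x)} ∧
      σ '' {x : X | ∀ n : ℤ, (N : ℤ) < n → 0 < f (n, x) ∧ f (-n, x) < 0}
        = {x : X | ∀ n : ℤ, (N : ℤ) < n → 0 < f (n, x) ∧ f (-n, x) < 0} ∧
      σ '' {x : X | ∀ n : ℤ, (N : ℤ) < n → f (n, x) < 0 ∧ 0 < f (-n, x)}
        = {x : X | ∀ n : ℤ, (N : ℤ) < n → f (n, x) < 0 ∧ 0 < f (-n, x)} ∧
      Disjoint {x : X | ∀ n : ℤ, (N : ℤ) < n → 0 < f (n, x) ∧ f (-n, x) < 0}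
        {x : X | ∀ n : ℤ, (N : ℤ) < n → f (n, x) < 0 ∧ 0 < f (-n, x)} ∧
      {x : X | ∀ n : ℤ, (N : ℤ) < n → 0 < f (n, x) ∧ f (-n, x) < 0}
        ∪ {x : X | ∀ n : ℤ, (N : ℤ) < n → f (n, x) < 0 ∧ 0 < f (-n, x)} = univ :=
  stmt2_general σ f hfc hcoc hbij g hg hgc
end

section
/- Let X and Y be second-countable compact totally disconnected Hausdorff spaces and σ : X → X, τ : Y → Y surjective local homeomorphisms. Suppose there exist continuous open maps f : X → Y and f' : Y → X and continuous maps a : X → ℕ₀, k : X → ℕ₀, a' : Y → ℕ₀, k' : Y → ℕ₀ such that σ^{a(x)}(f'(f(x))) = σ^{a(x)}(x) for all x ∈ X, τ^{k(x)}(f(σ(x))) = τ^{k(x)+1}(f(x)) for all x ∈ X, τ^{a'(y)}(f(f'(y))) = τ^{a'(y)}(y) for all y ∈ Y, and σ^{k'(y)}(f'(τ(y))) = σ^{k'(y)+1}(f'(y)) for all y ∈ Y. Then (X̄, σ̄) and (Ȳ, τ̄) are conjugate, i.e. there is a homeomorphism H : X̄ → Ȳ with H ∘ σ̄ = τ̄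 ∘ H. -/
open Set Function

/-- The two-sided extension `X̄` of `(X, σ)`: bi-infinite sequences compatible with `σ`,
topologised as a subspace of the product `X^ℤ`. -/
def shiftSpace {X : Type*} (σ : X → X) : Set (ℤ → X) :=
  {ξ | ∀ n : ℤ, σ (ξ n) = ξ (n + 1)}

/-- The shift homeomorphism `σ̄` on `X̄`, `σ̄(ξ)_n = σ(ξ_n)`. -/
def shiftMap {X : Type*} (σ : X → X) : shiftSpace σ → shiftSpace σ :=
  fun ξ => ⟨fun n => σ (ξ.1 n), fun n => congrArg σ (ξ.2 n)⟩

/-!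
If `φ : X → Y` and `ψ : Y → X` intertwine `σ` and `τ` and `ψ ∘ φ = σ^N`, `φ ∘ ψ = τ^N`, then
applying `φ` coordinatewise is a conjugacy `X̄ → Ȳ`: its inverse applies `ψ` and then reindexes
by `-N`, because on `X̄` the map `σ^N` is just the reindexing `n ↦ n + N`. The identities for `f`
and `f'` say that they intertwine and invert each other up to lags `a, k, a', k'`; these are
continuous on compact spaces, hence bounded by one `M`, and then `φ = τ^M ∘ f`, `ψ = σ^M ∘ f'`
satisfy the above with `N = 2M`.
-/

section Lag

variable {α β : Type*} {σ : α → α} {τ : β → β}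

theorem Function.iterate_eq_iterate_of_le {k M : ℕ} {u v : β} (h : τ^[k] u = τ^[k] v)
    (hk : k ≤ M) : τ^[M] u = τ^[M] v := by
  obtain ⟨d, rfl⟩ := Nat.exists_eq_add_of_le hk
  rw [add_comm, iterate_add_apply, iterate_add_apply, h]

theorem semiconj_iterate_comp_of_le {g : α → β} {k : α → ℕ} {M : ℕ}
    (hg : ∀ x, τ^[k x] (g (σ x)) = τ^[k x + 1] (g x)) (hk : ∀ x, k x ≤ M) :
    Semiconj (τ^[M] ∘ g) σ τ := by
  intro x
  rw [comp_apply, comp_apply, ← iterate_succ_apply' τ M, iterate_succ_apply]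
  exact iterate_eq_iterate_of_le (by rw [hg, iterate_succ_apply]) (hk x)

theorem iterate_comp_apply_iterate_comp_apply_of_le {g : α → β} {g' : β → α} {a : α → ℕ}
    {M : ℕ} (hg' : Semiconj (σ^[M] ∘ g') τ σ) (h : ∀ x, σ^[a x] (g' (g x)) = σ^[a x] x)
    (ha : ∀ x, a x ≤ M) (x : α) : (σ^[M] ∘ g') ((τ^[M] ∘ g) x) = σ^[M + M] x := by
  rw [comp_apply (f := τ^[M]), hg'.iterate_right M (g x), comp_apply, ← iterate_add_apply]
  exact iterate_eq_iterate_of_le (h x) ((ha x).trans (Nat.le_add_left M M))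

end Lag

namespace shiftSpace

variable {X Y : Type*} {σ : X → X} {τ : Y → Y}

theorem iterate_apply {ξ : ℤ → X} (hξ : ξ ∈ shiftSpace σ) (j : ℕ) (n : ℤ) :
    σ^[j] (ξ n) = ξ (n + j) := by
  induction j with
  | zero => simp
  | succ j ih =>
    rw [iterate_succ_apply', ih, hξ (n + j)]
    push_cast
    rw [add_assoc]

def shift (N : ℤ) (ξ : shiftSpace σ) : shiftSpace σ :=
  ⟨fun n => ξ.1 (n + N), fun n => by rw [ξ.2 (n + N), add_right_comm]⟩

@[simp]
theorem shift_neg_shift (N : ℤ) (ξ : shiftSpace σ) : shift (-N) (shift N ξ) = ξ := by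
  ext n
  simp [shift]

theorem continuous_shift [TopologicalSpace X] (N : ℤ) : Continuous (shift (σ := σ) N) :=
  (continuous_pi fun n => (continuous_apply (n + N)).comp continuous_subtype_val).subtype_mk
    (p := (· ∈ shiftSpace σ)) _

def map (φ : X → Y) (hφ : Semiconj φ σ τ) (ξ : shiftSpace σ) : shiftSpace τ :=
  ⟨fun n => φ (ξ.1 n), fun n => by rw [← hφ, ξ.2 n]⟩

theorem continuous_map [TopologicalSpace X] [TopologicalSpace Y] {φ : X → Y}
    (hφc : Continuous φ) (hφ : Semiconj φ σ τ) : Continuous (map φ hφ) :=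
  (continuous_pi fun n => hφc.comp ((continuous_apply n).comp continuous_subtype_val)).subtype_mk _

theorem map_shift {φ : X → Y} (hφ : Semiconj φ σ τ) (N : ℤ) (ξ : shiftSpace σ) :
    map φ hφ (shift N ξ) = shift N (map φ hφ ξ) :=
  rfl

theorem map_shiftMap {φ : X → Y} (hφ : Semiconj φ σ τ) (ξ : shiftSpace σ) :
    map φ hφ (shiftMap σ ξ) = shiftMap τ (map φ hφ ξ) :=
  Subtype.ext (funext fun n => hφ (ξ.1 n))

theorem map_map_of_comp_eq_iterate {φ : X → Y} {ψ : Y → X} (hφ : Semiconj φ σ τ)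
    (hψ : Semiconj ψ τ σ) {N : ℕ} (hψφ : ∀ x, ψ (φ x) = σ^[N] x) (ξ : shiftSpace σ) :
    map ψ hψ (map φ hφ ξ) = shift N ξ :=
  Subtype.ext (funext fun n => (hψφ (ξ.1 n)).trans (iterate_apply ξ.2 N n))

theorem exists_conjugacy_of_shiftEquivalence [TopologicalSpace X] [TopologicalSpace Y]
    {φ : X → Y} {ψ : Y → X} (hφc : Continuous φ) (hψc : Continuous ψ)
    (hφ : Semiconj φ σ τ) (hψ : Semiconj ψ τ σ) {N : ℕ}
    (hψφ : ∀ x, ψ (φ x) = σ^[N] x) (hφψ : ∀ y, φ (ψ y) = τ^[N] y) :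
    ∃ H : shiftSpace σ ≃ₜ shiftSpace τ, ∀ ξ, H (shiftMap σ ξ) = shiftMap τ (H ξ) :=
  ⟨{ toFun := map φ hφ
     invFun := fun η => shift (-N) (map ψ hψ η)
     left_inv := fun ξ => by simp only [map_map_of_comp_eq_iterate hφ hψ hψφ, shift_neg_shift]
     right_inv := fun η => by
       simp only [map_shift, map_map_of_comp_eq_iterate hψ hφ hφψ, shift_neg_shift]
     continuous_toFun := continuous_map hφc hφ
     continuous_invFun := (continuous_shift _).comp (continuous_map hψc hψ) },
    map_shiftMap hφ⟩

end shiftSpace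

theorem stmt9_general {X Y : Type*}
    [TopologicalSpace X] [CompactSpace X]
    [TopologicalSpace Y] [CompactSpace Y]
    (σ : X → X) (τ : Y → Y)
    (hσc : Continuous σ)
    (hτc : Continuous τ)
    (f : X → Y) (f' : Y → X)
    (hfc : Continuous f) (hf'c : Continuous f')
    (a : X → ℕ) (k : X → ℕ) (a' : Y → ℕ) (k' : Y → ℕ)
    (hac : Continuous a) (hkc : Continuous k) (ha'c : Continuous a') (hk'c : Continuous k')
    (h1 : ∀ x : X, σ^[a x] (f' (f x)) = σ^[a x] x)
    (h2 : ∀ x : X, τ^[k x] (f (σ x)) = τ^[k x + 1] (f x))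
    (h3 : ∀ y : Y, τ^[a' y] (f (f' y)) = τ^[a' y] y)
    (h4 : ∀ y : Y, σ^[k' y] (f' (τ y)) = σ^[k' y + 1] (f' y)) :
    ∃ H : shiftSpace σ ≃ₜ shiftSpace τ, ∀ ξ, H (shiftMap σ ξ) = shiftMap τ (H ξ) := by
  obtain ⟨m₁, hm₁⟩ := (isCompact_range hac).bddAbove
  obtain ⟨m₂, hm₂⟩ := (isCompact_range hkc).bddAbove
  obtain ⟨m₃, hm₃⟩ := (isCompact_range ha'c).bddAbove
  obtain ⟨m₄, hm₄⟩ := (isCompact_range hk'c).bddAbove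
  set M := m₁ + m₂ + m₃ + m₄
  have hMa : ∀ x, a x ≤ M := fun x => by have := hm₁ (mem_range_self x); omega
  have hMk : ∀ x, k x ≤ M := fun x => by have := hm₂ (mem_range_self x); omega
  have hMa' : ∀ y, a' y ≤ M := fun y => by have := hm₃ (mem_range_self y); omega
  have hMk' : ∀ y, k' y ≤ M := fun y => by have := hm₄ (mem_range_self y); omega
  have hφ := semiconj_iterate_comp_of_le h2 hMk
  have hψ := semiconj_iterate_comp_of_le h4 hMk'
  exact shiftSpace.exists_conjugacy_of_shiftEquivalence ((hτc.iterate M).comp hfc)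
    ((hσc.iterate M).comp hf'c) hφ hψ (iterate_comp_apply_iterate_comp_apply_of_le hψ h1 hMa)
    (iterate_comp_apply_iterate_comp_apply_of_le hφ h3 hMa')

theorem stmt9 {X Y : Type*}
    [TopologicalSpace X] [SecondCountableTopology X] [CompactSpace X] [T2Space X]
    [TotallyDisconnectedSpace X]
    [TopologicalSpace Y] [SecondCountableTopology Y] [CompactSpace Y] [T2Space Y]
    [TotallyDisconnectedSpace Y]
    (σ : X → X) (τ : Y → Y)
    (hσc : Continuous σ) (hσs : Surjective σ) (hσl : IsLocalHomeomorph σ)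
    (hτc : Continuous τ) (hτs : Surjective τ) (hτl : IsLocalHomeomorph τ)
    (f : X → Y) (f' : Y → X)
    (hfc : Continuous f) (hfo : IsOpenMap f) (hf'c : Continuous f') (hf'o : IsOpenMap f')
    (a : X → ℕ) (k : X → ℕ) (a' : Y → ℕ) (k' : Y → ℕ)
    (hac : Continuous a) (hkc : Continuous k) (ha'c : Continuous a') (hk'c : Continuous k')
    (h1 : ∀ x : X, σ^[a x] (f' (f x)) = σ^[a x] x)
    (h2 : ∀ x : X, τ^[k x] (f (σ x)) = τ^[k x + 1] (f x))
    (h3 : ∀ y : Y, τ^[a' y] (f (f' y)) = τ^[a' y] y)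
    (h4 : ∀ y : Y, σ^[k' y] (f' (τ y)) = σ^[k' y + 1] (f' y)) :
    ∃ H : shiftSpace σ ≃ₜ shiftSpace τ, ∀ ξ, H (shiftMap σ ξ) = shiftMap τ (H ξ) :=
  stmt9_general σ τ hσc hτc f f' hfc hf'c a k a' k' hac hkc ha'c hk'c h1 h2 h3 h4
end

section
/- Let X and Y be second-countable compact totally disconnected Hausdorff spaces and σ : X → X, τ : Y → Y surjective local homeomorphisms which are expansive. If (X̄, σ̄) and (Ȳ, τ̄) are conjugate (there is a homeomorphism H : X̄ → Ȳ with H ∘ σ̄ = τ̄ ∘ H), then there exist continuous open maps f : X → Y and f' : Y → X and continuous maps a : X → ℕ₀, k : X → ℕ₀, a' : Y → ℕ₀, k' : Y → ℕ₀ such that σ^{a(x)}(f'(f(x))) = σ^{a(x)}(x) for all x ∈ X, τ^{k(x)}(f(σ(x))) = τ^{k(x)+1}(f(x)) for all x ∈ X, τ^{a'(y)}(f(f'(y))) = τ^{a'(y)}(y) for all y ∈ Y, and σ^{k'(y)}(f'(τ(y))) = σ^{k'(y)+1}(f'(y)) for all y ∈ Y. -/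
open Set Function

/-- `σ` is expansive: for some metric inducing the topology of `X` there is `ε > 0`
such that `sup_n d(σⁿ(x), σⁿ(x')) < ε` implies `x = x'`. -/
def Expansive {X : Type*} [tX : TopologicalSpace X] (σ : X → X) : Prop :=
  ∃ m : MetricSpace X, m.toUniformSpace.toTopologicalSpace = tX ∧
    ∃ ε : ℝ, 0 < ε ∧ ∀ x x' : X,
      (⨆ n : ℕ, @dist X m.toDist (σ^[n] x) (σ^[n] x')) < ε → x = x'

section Aux

variable {X : Type*}

lemma shift_step {σ : X → X} (ξ : shiftSpace σ) (n : ℤ) : σ (ξ.1 n) = ξ.1 (n + 1) := ξ.2 n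

lemma iter_coord {σ : X → X} (ξ : shiftSpace σ) (n : ℤ) (N : ℕ) :
    σ^[N] (ξ.1 n) = ξ.1 (n + N) := by
  induction N with
  | zero => simp
  | succ N ih =>
    rw [Function.iterate_succ_apply', ih, shift_step ξ (n + N)]
    exact congrArg ξ.1 (by push_cast; ring)

lemma exists_coord {σ : X → X} (hs : Surjective σ) (x : X) (j : ℤ) :
    ∃ ξ : shiftSpace σ, ξ.1 j = x := by
  have hb : ∀ k, σ ((fun k => Nat.rec x (fun _ xk => surjInv hs xk) k : ℕ → X) (k + 1)) =
      (fun k => Nat.rec x (fun _ xk => surjInv hs xk) k : ℕ → X) k :=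
    fun k => surjInv_eq hs _
  set b : ℕ → X := fun k => Nat.rec x (fun _ xk => surjInv hs xk) k with hbdef
  refine ⟨⟨fun n => if 0 ≤ n - j then σ^[(n - j).toNat] x else b (j - n).toNat, ?_⟩, ?_⟩
  · intro n
    dsimp only
    by_cases h : 0 ≤ n - j
    · have h' : 0 ≤ n + 1 - j := by omega
      have h2 : (n + 1 - j).toNat = (n - j).toNat + 1 := by omega
      rw [if_pos h, if_pos h', h2, Function.iterate_succ_apply']
    · rw [if_neg h]
      by_cases h' : 0 ≤ n + 1 - j
      · have h1 : (j - n).toNat = 1 := by omega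
        have h2 : (n + 1 - j).toNat = 0 := by omega
        rw [if_pos h', h1, h2]
        exact hb 0
      · have h1 : (j - n).toNat = (j - (n + 1)).toNat + 1 := by omega
        rw [if_neg h', h1]
        exact hb _
  · simp

end Aux

section Aux2

variable {X : Type*}

lemma isClosed_shift [TopologicalSpace X] [T2Space X] {σ : X → X} (hc : Continuous σ) :
    IsClosed (shiftSpace σ) := by
  have h : shiftSpace σ = ⋂ n : ℤ, {ξ : ℤ → X | σ (ξ n) = ξ (n + 1)} := by
    ext ξ; simp only [shiftSpace, mem_iInter, mem_setOf_eq]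
  rw [h]
  exact isClosed_iInter fun n =>
    isClosed_eq (hc.comp (continuous_apply n)) (continuous_apply (n + 1))

lemma compactSpace_shift [TopologicalSpace X] [T2Space X] [CompactSpace X] {σ : X → X}
    (hc : Continuous σ) : CompactSpace (shiftSpace σ) :=
  isCompact_iff_compactSpace.mp (isClosed_shift hc).isCompact

lemma continuous_coord [TopologicalSpace X] (σ : X → X) (j : ℤ) :
    Continuous (fun ξ : shiftSpace σ => ξ.1 j) :=
  (continuous_apply j).comp continuous_subtype_val

lemma isOpenMap_iterate [TopologicalSpace X] {σ : X → X} (ho : IsOpenMap σ) (N : ℕ) :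
    IsOpenMap σ^[N] := by
  induction N with
  | zero => exact IsOpenMap.id
  | succ N ih => rw [Function.iterate_succ]; exact ih.comp ho

lemma isOpenMap_coord [TopologicalSpace X] {σ : X → X} (hc : Continuous σ) (hs : Surjective σ)
    (ho : IsOpenMap σ) (j : ℤ) : IsOpenMap (fun ξ : shiftSpace σ => ξ.1 j) := by
  intro S' hS'
  rw [isOpen_induced_iff] at hS'
  obtain ⟨O, hO, rfl⟩ := hS'
  rw [isOpen_iff_forall_mem_open]
  rintro y ⟨ξ, hξO, rfl⟩
  obtain ⟨I, u, hu, hsub⟩ := isOpen_pi_iff.mp hO ξ.1 hξO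
  have hne : (insert j I).Nonempty := ⟨j, Finset.mem_insert_self _ _⟩
  set k := (insert j I).min' hne with hk
  have hkj : k ≤ j := Finset.min'_le _ _ (Finset.mem_insert_self _ _)
  have hkI : ∀ n ∈ I, k ≤ n := fun n hn => Finset.min'_le _ _ (Finset.mem_insert_of_mem hn)
  set V : Set X := ⋂ n ∈ I, σ^[(n - k).toNat] ⁻¹' u n with hV
  have hVopen : IsOpen V :=
    isOpen_biInter_finset fun n hn => (hu n hn).1.preimage (hc.iterate _)
  refine ⟨σ^[(j - k).toNat] '' V, ?_, (isOpenMap_iterate ho _) V hVopen, ⟨ξ.1 k, ?_, ?_⟩⟩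
  · rintro _ ⟨v, hv, rfl⟩
    obtain ⟨ζ, hζ⟩ := exists_coord hs v k
    refine ⟨ζ, hsub ?_, ?_⟩
    · intro n hn
      have h1 : σ^[(n - k).toNat] (ζ.1 k) = ζ.1 (k + (n - k).toNat) := iter_coord ζ k _
      have h2 : k + ((n - k).toNat : ℤ) = n := by have := hkI n hn; omega
      have hv' : v ∈ σ^[(n - k).toNat] ⁻¹' u n := mem_iInter₂.mp hv n hn
      show ζ.1 n ∈ u n
      have h3 : ζ.1 n = σ^[(n - k).toNat] v := by rw [← hζ, h1, h2]
      rw [h3]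
      exact hv'
    · have h1 : σ^[(j - k).toNat] (ζ.1 k) = ζ.1 (k + (j - k).toNat) := iter_coord ζ k _
      have h2 : k + ((j - k).toNat : ℤ) = j := by omega
      rw [← hζ, h1, h2]
  · rw [hV, mem_iInter₂]
    intro n hn
    have h1 : σ^[(n - k).toNat] (ξ.1 k) = ξ.1 (k + (n - k).toNat) := iter_coord ξ k _
    have h2 : k + ((n - k).toNat : ℤ) = n := by have := hkI n hn; omega
    simp only [mem_preimage, h1, h2]
    exact (hu n hn).2
  · have h1 : σ^[(j - k).toNat] (ξ.1 k) = ξ.1 (k + (j - k).toNat) := iter_coord ξ k _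
    have h2 : k + ((j - k).toNat : ℤ) = j := by omega
    rw [h1, h2]

end Aux2
section Aux3

variable {X Y : Type*}

def shiftBy (σ : X → X) (d : ℤ) : shiftSpace σ → shiftSpace σ := fun ξ =>
  ⟨fun n => ξ.1 (n + d), fun n => by
    rw [shift_step ξ (n + d)]
    exact congrArg ξ.1 (by ring)⟩

lemma shiftBy_coord (σ : X → X) (d : ℤ) (ξ : shiftSpace σ) (n : ℤ) :
    (shiftBy σ d ξ).1 n = ξ.1 (n + d) := rfl

lemma shiftBy_add (σ : X → X) (a b : ℤ) (ξ : shiftSpace σ) :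
    shiftBy σ a (shiftBy σ b ξ) = shiftBy σ (a + b) ξ := by
  apply Subtype.ext
  funext n
  show ξ.1 (n + a + b) = ξ.1 (n + (a + b))
  exact congrArg ξ.1 (by ring)

lemma shiftBy_zero (σ : X → X) (ξ : shiftSpace σ) : shiftBy σ 0 ξ = ξ := by
  apply Subtype.ext
  funext n
  show ξ.1 (n + 0) = ξ.1 n
  exact congrArg ξ.1 (by ring)

lemma shiftBy_one (σ : X → X) (ξ : shiftSpace σ) : shiftBy σ 1 ξ = shiftMap σ ξ := by
  apply Subtype.ext
  funext n
  exact (shift_step ξ n).symm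

lemma H_shift [TopologicalSpace X] [TopologicalSpace Y] {σ : X → X} {τ : Y → Y}
    (H : shiftSpace σ ≃ₜ shiftSpace τ) (hH : ∀ ξ, H (shiftMap σ ξ) = shiftMap τ (H ξ))
    (d : ℤ) (ξ : shiftSpace σ) : H (shiftBy σ d ξ) = shiftBy τ d (H ξ) := by
  have hnat : ∀ (k : ℕ) (ξ : shiftSpace σ), H (shiftBy σ k ξ) = shiftBy τ k (H ξ) := by
    intro k
    induction k with
    | zero =>
      intro ξ
      simp only [Nat.cast_zero, shiftBy_zero]
    | succ k ih =>
      intro ξ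
      have h1 : ((k + 1 : ℕ) : ℤ) = 1 + (k : ℤ) := by push_cast; ring
      rw [h1, ← shiftBy_add σ 1 k ξ, shiftBy_one, hH, ih, ← shiftBy_one τ, shiftBy_add]
  rcases Int.eq_nat_or_neg d with ⟨m, rfl | rfl⟩
  · exact hnat m ξ
  · have h2 := hnat m (shiftBy σ (-(m : ℤ)) ξ)
    rw [shiftBy_add, add_neg_cancel, shiftBy_zero] at h2
    have h3 := congrArg (shiftBy τ (-(m : ℤ))) h2
    rw [shiftBy_add, neg_add_cancel, shiftBy_zero] at h3
    exact h3.symm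

end Aux3
section Half

lemma main_half {X Y : Type*} [TopologicalSpace X] [CompactSpace X] [T2Space X]
    [tY : TopologicalSpace Y]
    (σ : X → X) (τ : Y → Y)
    (hσc : Continuous σ) (hσs : Surjective σ) (hσo : IsOpenMap σ)
    (hτc : Continuous τ) (hτs : Surjective τ) (hτo : IsOpenMap τ)
    (hτe : Expansive τ)
    (H : shiftSpace σ ≃ₜ shiftSpace τ) (hH : ∀ ξ, H (shiftMap σ ξ) = shiftMap τ (H ξ)) :
    ∃ (f : X → Y) (m : ℕ), Continuous f ∧ IsOpenMap f ∧
      ∀ (ξ : shiftSpace σ) (j : ℤ), f (ξ.1 j) = (H ξ).1 (j + m) := by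
  obtain ⟨mY, hmY, ε, hε, hexp⟩ := hτe
  subst hmY
  letI : MetricSpace Y := mY
  haveI : CompactSpace (shiftSpace σ) := compactSpace_shift hσc
  set G : shiftSpace σ → Y := fun ξ => (H ξ).1 0 with hG
  have hGc : Continuous G := (continuous_coord τ 0).comp H.continuous
  set Z : ℕ → Set (shiftSpace σ × shiftSpace σ) := fun m =>
    {p | p.1.1 (-(m : ℤ)) = p.2.1 (-(m : ℤ))} ∩ {p | ε / 2 ≤ dist (G p.1) (G p.2)} with hZ
  have hZc : ∀ m, IsClosed (Z m) := by
    intro m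
    apply IsClosed.inter
    · exact isClosed_eq ((continuous_coord σ _).comp continuous_fst)
        ((continuous_coord σ _).comp continuous_snd)
    · exact isClosed_le continuous_const
        ((hGc.comp continuous_fst).dist (hGc.comp continuous_snd))
  have hZempty : (univ : Set (shiftSpace σ × shiftSpace σ)) ∩ ⋂ m, Z m = ∅ := by
    rw [univ_inter]
    ext p
    simp only [mem_iInter, mem_empty_iff_false, iff_false]
    intro h
    have hpe : p.1 = p.2 := by
      apply Subtype.ext; funext n
      have hm := (h (n.natAbs + 1)).1
      have h1 := iter_coord p.1 (-((n.natAbs + 1 : ℕ) : ℤ)) ((n + (n.natAbs + 1)).toNat)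
      have h2 := iter_coord p.2 (-((n.natAbs + 1 : ℕ) : ℤ)) ((n + (n.natAbs + 1)).toNat)
      have h3 : -(((n.natAbs + 1 : ℕ)) : ℤ) + (((n + (n.natAbs + 1)).toNat : ℕ) : ℤ) = n := by
        omega
      rw [h3] at h1 h2
      rw [← h1, ← h2]
      show σ^[(n + (↑n.natAbs + 1)).toNat] (p.1.1 (-((n.natAbs + 1 : ℕ) : ℤ)))
        = σ^[(n + (↑n.natAbs + 1)).toNat] (p.2.1 (-((n.natAbs + 1 : ℕ) : ℤ)))
      rw [hm]
    have hd : ε / 2 ≤ dist (G p.1) (G p.2) := (h 0).2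
    rw [hpe, dist_self] at hd
    linarith
  obtain ⟨t, ht⟩ := (isCompact_univ).elim_finite_subfamily_closed Z hZc hZempty
  set m₀ : ℕ := t.sup id with hm₀
  have hkey : ∀ ζ ζ' : shiftSpace σ, ζ.1 (-(m₀ : ℤ)) = ζ'.1 (-(m₀ : ℤ)) →
      dist (G ζ) (G ζ') < ε / 2 := by
    intro ζ ζ' hcoord
    by_contra hcon
    push_neg at hcon
    have hmem : (ζ, ζ') ∈ (univ : Set (shiftSpace σ × shiftSpace σ)) ∩ ⋂ m ∈ t, Z m := by
      refine ⟨trivial, mem_iInter₂.mpr fun m hm => ⟨?_, hcon⟩⟩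
      have hmle : m ≤ m₀ := Finset.le_sup (f := id) hm
      have h1 := iter_coord ζ (-(m₀ : ℤ)) (m₀ - m)
      have h2 := iter_coord ζ' (-(m₀ : ℤ)) (m₀ - m)
      have h3 : -(m₀ : ℤ) + ((m₀ - m : ℕ) : ℤ) = -(m : ℤ) := by omega
      rw [h3] at h1 h2
      show ζ.1 (-(m : ℤ)) = ζ'.1 (-(m : ℤ))
      rw [← h1, ← h2, hcoord]
    rw [ht] at hmem
    exact hmem
  have hfac : ∀ ζ ζ' : shiftSpace σ, ζ.1 (-(m₀ : ℤ)) = ζ'.1 (-(m₀ : ℤ)) → G ζ = G ζ' := by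
    intro ζ ζ' hcoord
    apply hexp
    have hb : ∀ N : ℕ, dist (τ^[N] (G ζ)) (τ^[N] (G ζ')) ≤ ε / 2 := by
      intro N
      have e1 : τ^[N] (G ζ) = G (shiftBy σ N ζ) := by
        show τ^[N] ((H ζ).1 0) = (H (shiftBy σ (N : ℤ) ζ)).1 0
        rw [H_shift H hH, shiftBy_coord]
        exact iter_coord (H ζ) 0 N
      have e2 : τ^[N] (G ζ') = G (shiftBy σ N ζ') := by
        show τ^[N] ((H ζ').1 0) = (H (shiftBy σ (N : ℤ) ζ')).1 0
        rw [H_shift H hH, shiftBy_coord]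
        exact iter_coord (H ζ') 0 N
      rw [e1, e2]
      apply le_of_lt
      apply hkey
      rw [shiftBy_coord, shiftBy_coord]
      have h1 := iter_coord ζ (-(m₀ : ℤ)) N
      have h2 := iter_coord ζ' (-(m₀ : ℤ)) N
      rw [← h1, ← h2, hcoord]
    calc (⨆ n : ℕ, dist (τ^[n] (G ζ)) (τ^[n] (G ζ')))
        ≤ ε / 2 := Real.iSup_le hb (by positivity)
      _ < ε := by linarith
  set f : X → Y := fun x => G (Classical.choose (exists_coord hσs x (-(m₀ : ℤ)))) with hf
  have hf0 : ∀ ζ : shiftSpace σ, f (ζ.1 (-(m₀ : ℤ))) = G ζ :=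
    fun ζ => hfac _ ζ (Classical.choose_spec (exists_coord hσs (ζ.1 (-(m₀ : ℤ))) (-(m₀ : ℤ))))
  have heval : ∀ (ξ : shiftSpace σ) (j : ℤ), f (ξ.1 j) = (H ξ).1 (j + m₀) := by
    intro ξ j
    have hc : (shiftBy σ (j + m₀) ξ).1 (-(m₀ : ℤ)) = ξ.1 j := by
      rw [shiftBy_coord]; exact congrArg ξ.1 (by ring)
    rw [← hc, hf0]
    show (H (shiftBy σ (j + m₀) ξ)).1 0 = (H ξ).1 (j + m₀)
    rw [H_shift H hH, shiftBy_coord]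
    exact congrArg (H ξ).1 (by ring)
  have hfc : Continuous f := by
    rw [continuous_def]
    intro V hV
    have himg : f ⁻¹' V = (fun ξ : shiftSpace σ => ξ.1 (-(m₀ : ℤ))) '' (G ⁻¹' V) := by
      ext x
      constructor
      · intro hx
        exact ⟨Classical.choose (exists_coord hσs x (-(m₀ : ℤ))), hx,
          Classical.choose_spec (exists_coord hσs x (-(m₀ : ℤ)))⟩
      · rintro ⟨ξ, hξ, rfl⟩
        show f (ξ.1 (-(m₀ : ℤ))) ∈ V
        rw [hf0]; exact hξ
    rw [himg]
    exact isOpenMap_coord hσc hσs hσo _ _ (hV.preimage hGc)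
  have hfo : IsOpenMap f := by
    intro U hU
    have himg : f '' U = (fun η : shiftSpace τ => η.1 (0 : ℤ)) ''
        (H '' ((fun ξ : shiftSpace σ => ξ.1 (-(m₀ : ℤ))) ⁻¹' U)) := by
      ext y
      constructor
      · rintro ⟨x, hx, rfl⟩
        obtain ⟨ξ, hξ⟩ := exists_coord hσs x (-(m₀ : ℤ))
        refine ⟨H ξ, ⟨ξ, ?_, rfl⟩, ?_⟩
        · show ξ.1 (-(m₀ : ℤ)) ∈ U; rw [hξ]; exact hx
        · show (H ξ).1 0 = f x
          rw [← hξ, hf0]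
      · rintro ⟨η, ⟨ξ, hξ, rfl⟩, rfl⟩
        exact ⟨ξ.1 (-(m₀ : ℤ)), hξ, hf0 ξ⟩
    rw [himg]
    exact isOpenMap_coord hτc hτs hτo 0 _ (H.isOpenMap _ (hU.preimage (continuous_coord σ _)))
  exact ⟨f, m₀, hfc, hfo, heval⟩

end Half
section Sect

variable {X : Type*} [TopologicalSpace X] [CompactSpace X] [T2Space X]
  [TotallyDisconnectedSpace X]

lemma exists_section {σ : X → X} (hσc : Continuous σ) (hσs : Surjective σ)
    (hσl : IsLocalHomeomorph σ) :
    ∃ s : X → X, Continuous s ∧ IsOpenMap s ∧ ∀ x, σ (s x) = x := by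
  classical
  choose e he hfe using hσl
  have hcl : ∀ x : X, ∃ V : Set X, IsClopen V ∧ x ∈ V ∧ V ⊆ (e x).source :=
    fun x => compact_exists_isClopen_in_isOpen (e x).open_source (he x)
  choose V hVclopen hVmem hVsub using hcl
  obtain ⟨t, htcov⟩ := isCompact_univ.elim_finite_subcover (fun x => V x)
    (fun x => (hVclopen x).isOpen) (fun x _ => mem_iUnion.mpr ⟨x, hVmem x⟩)
  have hσl' : IsLocalHomeomorph σ := fun x => ⟨e x, he x, hfe x⟩
  have himgclopen : ∀ z : X, IsClopen (σ '' V z) :=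
    fun z => ⟨((hVclopen z).isClosed.isCompact.image hσc).isClosed,
      hσl'.isOpenMap _ (hVclopen z).isOpen⟩
  have patch : ∀ l : List X, ∀ A : Set X, IsClopen A → (A ⊆ ⋃ z ∈ l, σ '' V z) →
      ∃ s : X → X, Continuous s ∧ IsOpenMap s ∧ ∀ x ∈ A, σ (s x) = x := by
    intro l
    induction l with
    | nil =>
      intro A _ hsub
      refine ⟨id, continuous_id, IsOpenMap.id, fun x hx => ?_⟩
      have h := hsub hx
      simp at h
    | cons hd tl ih =>
      intro A hA hsub
      set B : Set X := A ∩ σ '' V hd with hB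
      have hBclopen : IsClopen B := hA.inter (himgclopen hd)
      have hA' : IsClopen (A \ σ '' V hd) := hA.diff (himgclopen hd)
      have hsub' : A \ σ '' V hd ⊆ ⋃ z ∈ tl, σ '' V z := by
        intro x hx
        rcases mem_iUnion₂.mp (hsub hx.1) with ⟨z, hz, hxz⟩
        rcases List.mem_cons.mp hz with rfl | hz'
        · exact absurd hxz hx.2
        · exact mem_iUnion₂.mpr ⟨z, hz', hxz⟩
      obtain ⟨s', hs'c, hs'o, hs'sec⟩ := ih (A \ σ '' V hd) hA' hsub'
      set s : X → X := B.piecewise (e hd).symm s' with hs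
      have hBsubT : B ⊆ (e hd).target := by
        rintro x ⟨hxA, v, hv, rfl⟩
        rw [hfe hd]
        exact (e hd).map_source (hVsub hd hv)
      have hsc : Continuous s := by
        rw [continuous_iff_continuousAt]
        intro x
        by_cases hx : x ∈ B
        · have h1 : ContinuousAt (e hd).symm x :=
            (e hd).continuousOn_symm.continuousAt ((e hd).open_target.mem_nhds (hBsubT hx))
          apply h1.congr
          filter_upwards [hBclopen.isOpen.mem_nhds hx] with z hz
          exact (B.piecewise_eq_of_mem _ _ hz).symm
        · have h1 : ContinuousAt s' x := hs'c.continuousAt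
          apply h1.congr
          filter_upwards [hBclopen.compl.isOpen.mem_nhds hx] with z hz
          exact (B.piecewise_eq_of_notMem _ _ hz).symm
      have hso : IsOpenMap s := by
        intro W hW
        have himg : s '' W = (e hd).symm '' (W ∩ B) ∪ s' '' (W \ B) := by
          ext z
          constructor
          · rintro ⟨w, hw, rfl⟩
            by_cases hwB : w ∈ B
            · exact Or.inl ⟨w, ⟨hw, hwB⟩, (B.piecewise_eq_of_mem _ _ hwB).symm⟩
            · exact Or.inr ⟨w, ⟨hw, hwB⟩, (B.piecewise_eq_of_notMem _ _ hwB).symm⟩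
          · rintro (⟨w, hw, rfl⟩ | ⟨w, hw, rfl⟩)
            · exact ⟨w, hw.1, B.piecewise_eq_of_mem _ _ hw.2⟩
            · exact ⟨w, hw.1, B.piecewise_eq_of_notMem _ _ hw.2⟩
        rw [himg]
        apply IsOpen.union
        · apply (e hd).symm.isOpen_image_of_subset_source (hW.inter hBclopen.isOpen)
          rw [(e hd).symm_source]
          exact inter_subset_right.trans hBsubT
        · exact hs'o _ (hW.sdiff hBclopen.isClosed)
      have hssec : ∀ x ∈ A, σ (s x) = x := by
        intro x hxA
        by_cases hx : x ∈ B
        · rw [hs, B.piecewise_eq_of_mem _ _ hx, hfe hd]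
          exact (e hd).right_inv (hBsubT hx)
        · rw [hs, B.piecewise_eq_of_notMem _ _ hx]
          exact hs'sec x ⟨hxA, fun hc => hx ⟨hxA, hc⟩⟩
      exact ⟨s, hsc, hso, hssec⟩
  obtain ⟨s, hsc, hso, hssec⟩ := patch t.toList univ isClopen_univ (by
    intro y _
    obtain ⟨w, rfl⟩ := hσs y
    rcases mem_iUnion₂.mp (htcov (mem_univ w)) with ⟨z, hz, hwz⟩
    exact mem_iUnion₂.mpr ⟨z, Finset.mem_toList.mpr hz, ⟨w, hwz, rfl⟩⟩)
  exact ⟨s, hsc, hso, fun x => hssec x (mem_univ x)⟩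

end Sect

theorem stmt10 {X Y : Type*}
    [TopologicalSpace X] [SecondCountableTopology X] [CompactSpace X] [T2Space X]
    [TotallyDisconnectedSpace X]
    [TopologicalSpace Y] [SecondCountableTopology Y] [CompactSpace Y] [T2Space Y]
    [TotallyDisconnectedSpace Y]
    (σ : X → X) (τ : Y → Y)
    (hσc : Continuous σ) (hσs : Surjective σ) (hσl : IsLocalHomeomorph σ)
    (hτc : Continuous τ) (hτs : Surjective τ) (hτl : IsLocalHomeomorph τ)
    (hσe : Expansive σ) (hτe : Expansive τ)
    (H : shiftSpace σ ≃ₜ shiftSpace τ)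
    (hH : ∀ ξ, H (shiftMap σ ξ) = shiftMap τ (H ξ)) :
    ∃ (f : X → Y) (f' : Y → X) (a : X → ℕ) (k : X → ℕ) (a' : Y → ℕ) (k' : Y → ℕ),
      Continuous f ∧ IsOpenMap f ∧ Continuous f' ∧ IsOpenMap f' ∧
      Continuous a ∧ Continuous k ∧ Continuous a' ∧ Continuous k' ∧
      (∀ x : X, σ^[a x] (f' (f x)) = σ^[a x] x) ∧
      (∀ x : X, τ^[k x] (f (σ x)) = τ^[k x + 1] (f x)) ∧
      (∀ y : Y, τ^[a' y] (f (f' y)) = τ^[a' y] y) ∧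
      (∀ y : Y, σ^[k' y] (f' (τ y)) = σ^[k' y + 1] (f' y)) := by
  have hσo : IsOpenMap σ := hσl.isOpenMap
  have hτo : IsOpenMap τ := hτl.isOpenMap
  have hH2 : ∀ η, H.symm (shiftMap τ η) = shiftMap σ (H.symm η) := by
    intro η
    apply H.injective
    rw [H.apply_symm_apply, hH, H.apply_symm_apply]
  obtain ⟨f, m, hfc, hfo, hfeval⟩ := main_half σ τ hσc hσs hσo hτc hτs hτo hτe H hH
  obtain ⟨g, m', hgc, hgo, hgeval⟩ := main_half τ σ hτc hτs hτo hσc hσs hσo hσe H.symm hH2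
  obtain ⟨s, hsc, hso, hssec⟩ := exists_section hσc hσs hσl
  set c := m + m' with hc
  have hcomm : ∀ x, f (σ x) = τ (f x) := by
    intro x
    obtain ⟨ξ, hξ⟩ := exists_coord hσs x 0
    rw [← hξ, shift_step ξ 0, hfeval ξ (0 + 1), hfeval ξ 0, shift_step (H ξ) (0 + m)]
    exact congrArg (H ξ).1 (by ring)
  have hcomm' : ∀ y, g (τ y) = σ (g y) := by
    intro y
    obtain ⟨η, hη⟩ := exists_coord hτs y 0
    rw [← hη, shift_step η 0, hgeval η (0 + 1), hgeval η 0, shift_step (H.symm η) (0 + m')]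
    exact congrArg (H.symm η).1 (by ring)
  have hcommN : ∀ (N : ℕ) x, f (σ^[N] x) = τ^[N] (f x) := by
    intro N
    induction N with
    | zero => intro x; rfl
    | succ N ih =>
      intro x
      rw [Function.iterate_succ_apply, Function.iterate_succ_apply, ih, hcomm]
  have hcomp1 : ∀ x, g (f x) = σ^[c] x := by
    intro x
    obtain ⟨ξ, hξ⟩ := exists_coord hσs x 0
    rw [← hξ, hfeval ξ 0, hgeval (H ξ) (0 + m), H.symm_apply_apply, iter_coord ξ 0 c]
    exact congrArg ξ.1 (by push_cast [hc]; ring)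
  have hcomp2 : ∀ y, f (g y) = τ^[c] y := by
    intro y
    obtain ⟨η, hη⟩ := exists_coord hτs y 0
    rw [← hη, hgeval η 0, hfeval (H.symm η) (0 + m'), H.apply_symm_apply, iter_coord η 0 c]
    exact congrArg η.1 (by push_cast [hc]; ring)
  have hsiter : ∀ (N : ℕ) x, σ^[N] (s^[N] x) = x := by
    intro N
    induction N with
    | zero => intro x; rfl
    | succ N ih =>
      intro x
      rw [Function.iterate_succ_apply' s, Function.iterate_succ_apply σ, hssec, ih]
  refine ⟨f, s^[c] ∘ g, fun _ => c, fun _ => 0, fun _ => c, fun _ => c,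
    hfc, hfo, (hsc.iterate c).comp hgc, (isOpenMap_iterate hso c).comp hgo,
    continuous_const, continuous_const, continuous_const, continuous_const,
    ?_, ?_, ?_, ?_⟩
  · intro x
    show σ^[c] (s^[c] (g (f x))) = σ^[c] x
    rw [hsiter, hcomp1]
  · intro x
    show τ^[0] (f (σ x)) = τ^[0 + 1] (f x)
    simpa using hcomm x
  · intro y
    show τ^[c] (f (s^[c] (g y))) = τ^[c] y
    have h1 := hcommN c (s^[c] (g y))
    rw [hsiter] at h1
    rw [← h1, hcomp2]
  · intro y
    show σ^[c] (s^[c] (g (τ y))) = σ^[c + 1] (s^[c] (g y))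
    rw [hsiter, hcomm', Function.iterate_succ_apply' σ, hsiter]
end

section
/- Let A be a C*-algebra, D an abelian C*-subalgebra of A containing an approximate unit for A, and n a normaliser of D in A. Then n*n ∈ D and nn* ∈ D. -/
open WeakDual Filter Topology

universe u

/-- `D` contains an approximate unit for `A`: a net `(e_i)` in `D` with
`e_i a → a` and `a e_i → a` for all `a ∈ A`. -/
def HasApproxUnit {A : Type u} [NonUnitalCStarAlgebra A]
    (D : NonUnitalStarSubalgebra ℂ A) : Prop :=
  ∃ (ι : Type u) (l : Filter ι) (e : ι → A), l.NeBot ∧ (∀ i, e i ∈ D) ∧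
    ∀ a : A, Tendsto (fun i => e i * a) l (𝓝 a) ∧ Tendsto (fun i => a * e i) l (𝓝 a)

/-- `n` is a normaliser of `D` in `A`: `nDn* ⊆ D` and `n*Dn ⊆ D`. -/
def IsNormalizer {A : Type u} [NonUnitalCStarAlgebra A]
    (D : NonUnitalStarSubalgebra ℂ A) (n : A) : Prop :=
  ∀ d ∈ D, n * d * star n ∈ D ∧ star n * d * n ∈ D

theorem stmt11 {A : Type u} [NonUnitalCStarAlgebra A]
    (D : NonUnitalStarSubalgebra ℂ A) (hDc : IsClosed (D : Set A))
    (hab : ∀ a ∈ D, ∀ b ∈ D, a * b = b * a)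
    (hau : HasApproxUnit D)
    (n : A) (hn : IsNormalizer D n) :
    star n * n ∈ D ∧ n * star n ∈ D := by
  obtain ⟨ι, l, e, hl, he, ht⟩ := hau
  constructor
  · have h1 : Tendsto (fun i => star n * e i * n) l (𝓝 (star n * n)) := by
      simpa [mul_assoc] using ((ht n).1.const_mul (star n))
    exact hDc.mem_of_tendsto h1 (Eventually.of_forall fun i => (hn _ (he i)).2)
  · have h1 : Tendsto (fun i => n * e i * star n) l (𝓝 (n * star n)) := by
      simpa [mul_assoc] using ((ht (star n)).1.const_mul n)
    exact hDc.mem_of_tendsto h1 (Eventually.of_forall fun i => (hn _ (he i)).1)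
end

section
/- Let A be a C*-algebra, D an abelian C*-subalgebra of A containing an approximate unit for A, and n a normaliser of D in A (so that n*n, nn* ∈ D). Then there is a unique homeomorphism α_n : supp°(n*n) → supp°(nn*) such that φ(n*n) · α_n(φ)(d) = φ(n*dn) for all φ ∈ supp°(n*n) and all d ∈ D. -/
open WeakDual Filter Topology

universe u

/-- `supp°(d) = {φ ∈ D̂ : φ(d) ≠ 0}`, an open subset of the character space of `D`. -/
def suppo {A : Type u} [NonUnitalCStarAlgebra A] (D : NonUnitalStarSubalgebra ℂ A)
    (d : D) : Set ↥(characterSpace ℂ D) :=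
  {φ | φ.1 d ≠ 0}

/-- `e` is the partial homeomorphism `α_n : supp°(n*n) → supp°(nn*)` of the character
space of `D` determined by `φ(n*n)·(α_n φ)(d) = φ(n*dn)` for `φ ∈ supp°(n*n)`, `d ∈ D`. -/
def IsAlphaFor {A : Type u} [NonUnitalCStarAlgebra A] (D : NonUnitalStarSubalgebra ℂ A)
    (n : A) (e : PartialHomeomorph ↥(characterSpace ℂ D) ↥(characterSpace ℂ D)) : Prop :=
  ∀ (h1 : star n * n ∈ D) (h2 : n * star n ∈ D),
    e.source = suppo D ⟨star n * n, h1⟩ ∧ e.target = suppo D ⟨n * star n, h2⟩ ∧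
    ∀ φ ∈ e.source, ∀ (d : D) (hd : star n * (d : A) * n ∈ D),
      φ.1 ⟨star n * n, h1⟩ * (e φ).1 d = φ.1 ⟨star n * (d : A) * n, hd⟩

/-!
For `φ(n*n) ≠ 0` the defining identity forces `α_n(φ)(d) = φ(n*n)⁻¹ φ(n*dn)`, which gives
uniqueness. This functional is a character because `(n*xn)(n*yn) = (n*n)(n*(xy)n)`, as `x`
commutes with `nn* ∈ D`, and its value at `nn*` is `φ(n*n) ≠ 0`. The same construction for `n*`
inverts it, since `n*(ndn*)n = (n*n) d (n*n)`, and both maps are weak* continuous because each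
evaluation of `α_n(φ)` is a quotient of evaluations of `φ`.
-/

section TwistedCharacter

variable {B : Type*} [NonUnitalRing B] [TopologicalSpace B] [Module ℂ B]

-- For `α_n` one takes `T d = n* d n` and `c = n*n`.
noncomputable def twistedFunctional (T : B →L[ℂ] B) (c : B) (φ : WeakDual ℂ B) :
    WeakDual ℂ B :=
  (φ c)⁻¹ • (φ : B →L[ℂ] ℂ).comp T

theorem twistedFunctional_apply (T : B →L[ℂ] B) (c : B) (φ : WeakDual ℂ B) (x : B) :
    twistedFunctional T c φ x = (φ c)⁻¹ * φ (T x) :=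
  rfl

theorem continuousOn_twistedFunctional (T : B →L[ℂ] B) (c : B) :
    ContinuousOn (twistedFunctional T c) {φ | φ c ≠ 0} := by
  rw [continuousOn_iff_continuous_domRestrict]
  refine continuous_of_continuous_eval fun x => ?_
  have hev (y : B) :
      Continuous fun φ : {φ : WeakDual ℂ B | φ c ≠ 0} => (φ : WeakDual ℂ B) y :=
    (eval_continuous y).comp continuous_subtype_val
  exact ((hev c).inv₀ fun φ => φ.2).mul (hev (T x))

variable {T : B →L[ℂ] B} {c c' : B}

theorem twistedFunctional_apply_of_apply_eq_mul (hb : T c' = c * c)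
    {φ : characterSpace ℂ B} (hφ : φ c ≠ 0) : twistedFunctional T c φ c' = φ c := by
  rw [twistedFunctional_apply, WeakDual.CharacterSpace.coe_coe, hb, map_mul,
    inv_mul_cancel_left₀ hφ]

theorem twistedFunctional_mem_characterSpace (hT : ∀ x y, T x * T y = c * T (x * y))
    (hb : T c' = c * c) {φ : characterSpace ℂ B} (hφ : φ c ≠ 0) :
    twistedFunctional T c φ ∈ characterSpace ℂ B := by
  refine ⟨fun h0 => hφ ?_, fun x y => ?_⟩
  · rw [← twistedFunctional_apply_of_apply_eq_mul hb hφ, h0]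
    rfl
  · have hxy : φ (T (x * y)) = (φ c)⁻¹ * (φ (T x) * φ (T y)) := by
      rw [← map_mul φ, hT, map_mul φ, inv_mul_cancel_left₀ hφ]
    simp only [twistedFunctional_apply, WeakDual.CharacterSpace.coe_coe]
    rw [hxy]
    ring

noncomputable def twistedChar (hT : ∀ x y, T x * T y = c * T (x * y)) (hb : T c' = c * c)
    (φ : characterSpace ℂ B) : characterSpace ℂ B :=
  if hφ : φ c ≠ 0 then
    ⟨twistedFunctional T c φ, twistedFunctional_mem_characterSpace hT hb hφ⟩
  else φ

theorem mul_twistedChar_apply {hT : ∀ x y, T x * T y = c * T (x * y)} {hb : T c' = c * c}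
    {φ : characterSpace ℂ B} (hφ : φ c ≠ 0) (x : B) :
    φ c * twistedChar hT hb φ x = φ (T x) := by
  rw [twistedChar, dif_pos hφ]
  exact mul_inv_cancel_left₀ hφ _

variable (hT : ∀ x y, T x * T y = c * T (x * y)) (hb : T c' = c * c)

theorem twistedChar_apply {φ : characterSpace ℂ B} (hφ : φ c ≠ 0) (x : B) :
    twistedChar hT hb φ x = (φ c)⁻¹ * φ (T x) := by
  rw [twistedChar, dif_pos hφ]
  rfl

theorem twistedChar_apply_of_apply_eq_mul {φ : characterSpace ℂ B} (hφ : φ c ≠ 0) :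
    twistedChar hT hb φ c' = φ c := by
  rw [twistedChar, dif_pos hφ]
  exact twistedFunctional_apply_of_apply_eq_mul hb hφ

theorem continuousOn_twistedChar : ContinuousOn (twistedChar hT hb) {φ | φ c ≠ 0} := by
  rw [Topology.IsInducing.subtypeVal.continuousOn_iff]
  refine ((continuousOn_twistedFunctional T c).comp continuous_subtype_val.continuousOn
    fun φ hφ => hφ).congr fun φ hφ => ?_
  simp only [Function.comp_apply, twistedChar, dif_pos (show φ c ≠ 0 from hφ)]

variable {T' : B →L[ℂ] B} (hT' : ∀ x y, T' x * T' y = c' * T' (x * y))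
  (hc : T' c = c' * c')

theorem twistedChar_twistedChar (hTT' : ∀ x, T (T' x) = c * x * c)
    {φ : characterSpace ℂ B} (hφ : φ c ≠ 0) :
    twistedChar hT' hc (twistedChar hT hb φ) = φ := by
  have hψ : twistedChar hT hb φ c' = φ c := twistedChar_apply_of_apply_eq_mul hT hb hφ
  ext x
  rw [twistedChar_apply hT' hc (hψ ▸ hφ), hψ, twistedChar_apply hT hb hφ, hTT', map_mul,
    map_mul, mul_assoc, inv_mul_cancel_left₀ hφ, mul_comm (φ x), inv_mul_cancel_left₀ hφ]

noncomputable def twistedPartialHomeomorph (hTT' : ∀ x, T (T' x) = c * x * c)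
    (hT'T : ∀ x, T' (T x) = c' * x * c') :
    PartialHomeomorph (characterSpace ℂ B) (characterSpace ℂ B) where
  toFun := twistedChar hT hb
  invFun := twistedChar hT' hc
  source := {φ | φ c ≠ 0}
  target := {φ | φ c' ≠ 0}
  map_source' _ hφ := by
    simpa [twistedChar_apply_of_apply_eq_mul hT hb hφ] using hφ
  map_target' _ hφ := by
    simpa [twistedChar_apply_of_apply_eq_mul hT' hc hφ] using hφ
  left_inv' _ hφ := twistedChar_twistedChar hT hb hT' hc hTT' hφ
  right_inv' _ hφ := twistedChar_twistedChar hT' hc hT hb hT'T hφ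
  continuousOn_toFun := continuousOn_twistedChar hT hb
  continuousOn_invFun := continuousOn_twistedChar hT' hc

@[simp]
theorem coe_twistedPartialHomeomorph (hTT' : ∀ x, T (T' x) = c * x * c)
    (hT'T : ∀ x, T' (T x) = c' * x * c') :
    ⇑(twistedPartialHomeomorph hT hb hT' hc hTT' hT'T) = twistedChar hT hb :=
  rfl

end TwistedCharacter

section Normalizer

variable {A : Type u} [NonUnitalCStarAlgebra A] {D : NonUnitalStarSubalgebra ℂ A}

noncomputable def conjCLM (D : NonUnitalStarSubalgebra ℂ A) (p q : A)
    (h : ∀ d ∈ D, p * d * q ∈ D) : D →L[ℂ] D where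
  toFun d := ⟨p * d * q, h d d.2⟩
  map_add' x y := Subtype.ext <| by simp [mul_add, add_mul]
  map_smul' a x := Subtype.ext <| by simp [mul_smul_comm, smul_mul_assoc]
  cont := ((continuous_const.mul continuous_subtype_val).mul continuous_const).subtype_mk _

variable {p q : A} {h : ∀ d ∈ D, p * d * q ∈ D}

@[simp]
theorem coe_conjCLM_apply (d : D) : (conjCLM D p q h d : A) = p * d * q :=
  rfl

theorem conjCLM_mul_conjCLM (hab : ∀ a ∈ D, ∀ b ∈ D, a * b = b * a) (hpq : p * q ∈ D)
    (hqp : q * p ∈ D) (x y : D) :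
    conjCLM D p q h x * conjCLM D p q h y = ⟨p * q, hpq⟩ * conjCLM D p q h (x * y) := by
  ext
  calc p * x * q * (p * y * q) = p * ((x : A) * (q * p)) * (y * q) := by simp only [mul_assoc]
    _ = p * ((q * p) * x) * (y * q) := by rw [hab x x.2 _ hqp]
    _ = p * q * (p * (x * y) * q) := by simp only [mul_assoc]

theorem conjCLM_apply_swap_mul (hpq : p * q ∈ D) (hqp : q * p ∈ D) :
    conjCLM D p q h ⟨q * p, hqp⟩ = ⟨p * q, hpq⟩ * ⟨p * q, hpq⟩ := by
  ext
  simp only [coe_conjCLM_apply, NonUnitalStarSubalgebra.coe_mul, mul_assoc]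

theorem conjCLM_conjCLM (hpq : p * q ∈ D) {h' : ∀ d ∈ D, q * d * p ∈ D} (x : D) :
    conjCLM D p q h (conjCLM D q p h' x) = ⟨p * q, hpq⟩ * x * ⟨p * q, hpq⟩ := by
  ext
  simp only [coe_conjCLM_apply, NonUnitalStarSubalgebra.coe_mul, mul_assoc]

noncomputable def normalizerPartialHomeomorph (hab : ∀ a ∈ D, ∀ b ∈ D, a * b = b * a)
    {n : A} (hn : IsNormalizer D n) (hn1 : star n * n ∈ D) (hn2 : n * star n ∈ D) :
    PartialHomeomorph (characterSpace ℂ D) (characterSpace ℂ D) :=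
  twistedPartialHomeomorph (T := conjCLM D (star n) n fun d hd => (hn d hd).2)
    (T' := conjCLM D n (star n) fun d hd => (hn d hd).1)
    (conjCLM_mul_conjCLM hab hn1 hn2) (conjCLM_apply_swap_mul hn1 hn2)
    (conjCLM_mul_conjCLM hab hn2 hn1) (conjCLM_apply_swap_mul hn2 hn1)
    (conjCLM_conjCLM hn1) (conjCLM_conjCLM hn2)

theorem isAlphaFor_normalizerPartialHomeomorph (hab : ∀ a ∈ D, ∀ b ∈ D, a * b = b * a)
    {n : A} (hn : IsNormalizer D n) (hn1 : star n * n ∈ D) (hn2 : n * star n ∈ D) :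
    IsAlphaFor D n (normalizerPartialHomeomorph hab hn hn1 hn2) := by
  refine fun _ _ => ⟨rfl, rfl, fun φ hφ d _ => ?_⟩
  rw [normalizerPartialHomeomorph, coe_twistedPartialHomeomorph]
  exact mul_twistedChar_apply hφ d

theorem IsAlphaFor.eqOn {n : A} (hn : IsNormalizer D n) (hn1 : star n * n ∈ D)
    (hn2 : n * star n ∈ D)
    {e e' : PartialHomeomorph (characterSpace ℂ D) (characterSpace ℂ D)}
    (he : IsAlphaFor D n e) (he' : IsAlphaFor D n e') : Set.EqOn e' e e.source := by
  obtain ⟨hs, -, hk⟩ := he hn1 hn2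
  obtain ⟨hs', -, hk'⟩ := he' hn1 hn2
  intro φ hφ
  have hφ0 : φ ∈ suppo D ⟨star n * n, hn1⟩ := hs ▸ hφ
  ext d
  exact mul_left_cancel₀ hφ0 ((hk' φ (hs' ▸ hφ0) d (hn d d.2).2).trans (hk φ hφ d _).symm)

end Normalizer

theorem stmt12_general {A : Type u} [NonUnitalCStarAlgebra A]
    (D : NonUnitalStarSubalgebra ℂ A)
    (hab : ∀ a ∈ D, ∀ b ∈ D, a * b = b * a)
    (n : A) (hn : IsNormalizer D n)
    (hn1 : star n * n ∈ D) (hn2 : n * star n ∈ D) :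
    ∃ e : PartialHomeomorph ↥(characterSpace ℂ D) ↥(characterSpace ℂ D),
      IsAlphaFor D n e ∧
      ∀ e' : PartialHomeomorph ↥(characterSpace ℂ D) ↥(characterSpace ℂ D),
        IsAlphaFor D n e' → Set.EqOn (⇑e') (⇑e) e.source :=
  have he := isAlphaFor_normalizerPartialHomeomorph hab hn hn1 hn2
  ⟨_, he, fun _ he' => IsAlphaFor.eqOn hn hn1 hn2 he he'⟩

theorem stmt12 {A : Type u} [NonUnitalCStarAlgebra A]
    (D : NonUnitalStarSubalgebra ℂ A) (hDc : IsClosed (D : Set A))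
    (hab : ∀ a ∈ D, ∀ b ∈ D, a * b = b * a)
    (hau : HasApproxUnit D)
    (n : A) (hn : IsNormalizer D n)
    (hn1 : star n * n ∈ D) (hn2 : n * star n ∈ D) :
    ∃ e : PartialHomeomorph ↥(characterSpace ℂ D) ↥(characterSpace ℂ D),
      IsAlphaFor D n e ∧
      ∀ e' : PartialHomeomorph ↥(characterSpace ℂ D) ↥(characterSpace ℂ D),
        IsAlphaFor D n e' → Set.EqOn (⇑e') (⇑e) e.source :=
  stmt12_general D hab n hn hn1 hn2
end

section
/- Let A be a C*-algebra, D an abelian C*-subalgebra of A containing an approximate unit for A, and m, n normalisers of D in A. Then: (1) mn is a normaliser of D in A; (2) supp°((mn)*(mn)) = α_n⁻¹(supp°(m*m) ∩ supp°(nn*)); (3) on this domain, α_m ∘ α_n = α_{mn}; and (4) n* is a normaliser of D in A with α_{n*} = α_n⁻¹. -/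
open WeakDual Filter Topology

universe u

variable {A : Type u} [NonUnitalCStarAlgebra A] {D : NonUnitalStarSubalgebra ℂ A}

lemma aux_star_mul_self_mem (hDc : IsClosed (D : Set A)) (hau : HasApproxUnit D)
    {n : A} (hn : IsNormalizer D n) : star n * n ∈ D := by
  obtain ⟨ι, l, e, hne, heD, hconv⟩ := hau
  have h1 : Tendsto (fun i => star n * (e i * n)) l (𝓝 (star n * n)) :=
    ((continuous_mul_left (star n)).tendsto _).comp (hconv n).1
  exact hDc.mem_of_tendsto h1 (Eventually.of_forall fun i => by
    simpa [mul_assoc] using (hn (e i) (heD i)).2)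

lemma aux_mul_star_self_mem (hDc : IsClosed (D : Set A)) (hau : HasApproxUnit D)
    {n : A} (hn : IsNormalizer D n) : n * star n ∈ D := by
  obtain ⟨ι, l, e, hne, heD, hconv⟩ := hau
  have h1 : Tendsto (fun i => n * (e i * star n)) l (𝓝 (n * star n)) :=
    ((continuous_mul_left n).tendsto _).comp (hconv (star n)).1
  exact hDc.mem_of_tendsto h1 (Eventually.of_forall fun i => by
    simpa [mul_assoc] using (hn (e i) (heD i)).1)

lemma charCongr (φ : characterSpace ℂ D) {x y : A} (h : x = y) (hx : x ∈ D) (hy : y ∈ D) :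
    φ.1 ⟨x, hx⟩ = φ.1 ⟨y, hy⟩ := by subst h; rfl

lemma charMulD (φ : characterSpace ℂ D) (x y : D) : φ.1 (x * y) = φ.1 x * φ.1 y := map_mul φ x y

lemma aux_vanish (hab : ∀ a ∈ D, ∀ b ∈ D, a * b = b * a)
    {n : A} (h1 : star n * n ∈ D) (h2 : n * star n ∈ D)
    (φ : characterSpace ℂ D) (hφ : φ.1 ⟨star n * n, h1⟩ = 0)
    {d : A} (hd : d ∈ D) (h3 : star n * d * n ∈ D) (h4 : star n * (d * d) * n ∈ D) :
    φ.1 ⟨star n * d * n, h3⟩ = 0 := by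
  have hcomm : d * (n * star n) = n * star n * d := hab d hd _ h2
  have key : (⟨star n * d * n, h3⟩ : D) * ⟨star n * d * n, h3⟩
      = ⟨star n * n, h1⟩ * ⟨star n * (d * d) * n, h4⟩ := by
    apply Subtype.ext
    show star n * d * n * (star n * d * n) = star n * n * (star n * (d * d) * n)
    have e1 : star n * d * n * (star n * d * n) = star n * (d * (n * star n)) * (d * n) := by
      noncomm_ring
    rw [e1, hcomm]; noncomm_ring
  have h0 : φ.1 ⟨star n * d * n, h3⟩ * φ.1 ⟨star n * d * n, h3⟩ = 0 := by
    rw [← charMulD, key, charMulD, hφ, zero_mul]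
  exact mul_self_eq_zero.mp h0

theorem stmt13 {A : Type u} [NonUnitalCStarAlgebra A]
    (D : NonUnitalStarSubalgebra ℂ A) (hDc : IsClosed (D : Set A))
    (hab : ∀ a ∈ D, ∀ b ∈ D, a * b = b * a)
    (hau : HasApproxUnit D)
    (m n : A) (hm : IsNormalizer D m) (hn : IsNormalizer D n)
    (em en : PartialHomeomorph ↥(characterSpace ℂ D) ↥(characterSpace ℂ D))
    (hem : IsAlphaFor D m em) (hen : IsAlphaFor D n en) :
    IsNormalizer D (m * n) ∧
    (∀ (hmn : star (m * n) * (m * n) ∈ D) (hm1 : star m * m ∈ D) (hn2 : n * star n ∈ D),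
      suppo D ⟨star (m * n) * (m * n), hmn⟩
        = en.source ∩ ⇑en ⁻¹' (suppo D ⟨star m * m, hm1⟩ ∩ suppo D ⟨n * star n, hn2⟩)) ∧
    (∀ emn : PartialHomeomorph ↥(characterSpace ℂ D) ↥(characterSpace ℂ D),
      IsAlphaFor D (m * n) emn →
        ∀ φ ∈ en.source, en φ ∈ em.source → emn φ = em (en φ)) ∧
    (IsNormalizer D (star n) ∧
      ∀ e' : PartialHomeomorph ↥(characterSpace ℂ D) ↥(characterSpace ℂ D),
        IsAlphaFor D (star n) e' → ∀ φ ∈ en.target, e' φ = en.symm φ) := by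
  have hm1 : star m * m ∈ D := aux_star_mul_self_mem hDc hau hm
  have hm2 : m * star m ∈ D := aux_mul_star_self_mem hDc hau hm
  have hn1 : star n * n ∈ D := aux_star_mul_self_mem hDc hau hn
  have hn2 : n * star n ∈ D := aux_mul_star_self_mem hDc hau hn
  obtain ⟨hensrc, hentgt, henrel⟩ := hen hn1 hn2
  obtain ⟨hemsrc, hemtgt, hemrel⟩ := hem hm1 hm2
  have part1 : IsNormalizer D (m * n) := by
    intro d hd
    refine ⟨?_, ?_⟩
    · simpa [star_mul, mul_assoc] using (hm _ (hn d hd).1).1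
    · simpa [star_mul, mul_assoc] using (hn _ (hm d hd).2).2
  have hxmem : star n * (star m * m) * n ∈ D := (hn _ hm1).2
  have hmn1 : star (m * n) * (m * n) ∈ D := aux_star_mul_self_mem hDc hau part1
  have hmn2 : (m * n) * star (m * n) ∈ D := aux_mul_star_self_mem hDc hau part1
  have hmn_eq : ∀ (hmn : star (m * n) * (m * n) ∈ D) (φ : characterSpace ℂ D),
      φ.1 ⟨star (m * n) * (m * n), hmn⟩ = φ.1 ⟨star n * (star m * m) * n, hxmem⟩ :=
    fun hmn φ => charCongr φ (by simp [star_mul, mul_assoc]) _ _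
  have keyrel : ∀ φ ∈ en.source, φ.1 ⟨star n * (star m * m) * n, hxmem⟩
      = φ.1 ⟨star n * n, hn1⟩ * (en φ).1 ⟨star m * m, hm1⟩ :=
    fun φ hφ => (henrel φ hφ ⟨star m * m, hm1⟩ hxmem).symm
  have keyvanish : ∀ φ : characterSpace ℂ D, φ.1 ⟨star n * n, hn1⟩ = 0 →
      φ.1 ⟨star n * (star m * m) * n, hxmem⟩ = 0 :=
    fun φ h0 => aux_vanish hab hn1 hn2 φ h0 hm1 hxmem ((hn _ (mul_mem hm1 hm1)).2)
  have part2 : ∀ (hmn : star (m * n) * (m * n) ∈ D) (hm1' : star m * m ∈ D)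
      (hn2' : n * star n ∈ D),
      suppo D ⟨star (m * n) * (m * n), hmn⟩
        = en.source ∩ ⇑en ⁻¹' (suppo D ⟨star m * m, hm1'⟩ ∩ suppo D ⟨n * star n, hn2'⟩) := by
    intro hmn hm1' hn2'
    ext φ
    simp only [suppo, Set.mem_setOf_eq, Set.mem_inter_iff, Set.mem_preimage]
    rw [hmn_eq hmn φ]
    constructor
    · intro h
      have hsrc : φ ∈ en.source := by
        rw [hensrc]
        exact fun h0 => h (keyvanish φ h0)
      refine ⟨hsrc, ?_, ?_⟩
      · intro h0
        apply h
        rw [keyrel φ hsrc]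
        rw [show ((en φ).1 ⟨star m * m, hm1⟩ : ℂ) = 0 from h0, mul_zero]
      · have := en.map_source hsrc
        rw [hentgt] at this
        exact this
    · rintro ⟨hsrc, hm0, -⟩
      rw [keyrel φ hsrc]
      have hφn : φ.1 ⟨star n * n, hn1⟩ ≠ 0 := by rw [hensrc] at hsrc; exact hsrc
      exact mul_ne_zero hφn hm0
  have part3 : ∀ emn : PartialHomeomorph ↥(characterSpace ℂ D) ↥(characterSpace ℂ D),
      IsAlphaFor D (m * n) emn →
        ∀ φ ∈ en.source, en φ ∈ em.source → emn φ = em (en φ) := by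
    intro emn hemn φ hφ hψ
    obtain ⟨hmnsrc, hmntgt, hmnrel⟩ := hemn hmn1 hmn2
    set ψ := en φ with hψdef
    have hφn : φ.1 ⟨star n * n, hn1⟩ ≠ 0 := by rw [hensrc] at hφ; exact hφ
    have hψm : ψ.1 ⟨star m * m, hm1⟩ ≠ 0 := by rw [hemsrc] at hψ; exact hψ
    have hval : φ.1 ⟨star (m * n) * (m * n), hmn1⟩
        = φ.1 ⟨star n * n, hn1⟩ * ψ.1 ⟨star m * m, hm1⟩ := by
      rw [hmn_eq hmn1 φ, keyrel φ hφ]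
    have hc : φ.1 ⟨star (m * n) * (m * n), hmn1⟩ ≠ 0 := by
      rw [hval]; exact mul_ne_zero hφn hψm
    have hφsrc : φ ∈ emn.source := by rw [hmnsrc]; exact hc
    have hpt : ∀ d : D, (emn φ).1 d = (em ψ).1 d := by
      intro d
      apply mul_left_cancel₀ hc
      have hdm : star m * (d : A) * m ∈ D := (hm d d.2).2
      have hdmn : star (m * n) * (d : A) * (m * n) ∈ D := (part1 d d.2).2
      have hdn : star n * (star m * (d : A) * m) * n ∈ D := (hn _ hdm).2
      calc φ.1 ⟨star (m * n) * (m * n), hmn1⟩ * (emn φ).1 d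
          = φ.1 ⟨star (m * n) * (d : A) * (m * n), hdmn⟩ := hmnrel φ hφsrc d hdmn
        _ = φ.1 ⟨star n * (star m * (d : A) * m) * n, hdn⟩ :=
            charCongr φ (by simp [star_mul, mul_assoc]) _ _
        _ = φ.1 ⟨star n * n, hn1⟩ * (en φ).1 ⟨star m * (d : A) * m, hdm⟩ :=
            (henrel φ hφ ⟨star m * (d : A) * m, hdm⟩ hdn).symm
        _ = φ.1 ⟨star n * n, hn1⟩ * (ψ.1 ⟨star m * m, hm1⟩ * (em ψ).1 d) := by
            rw [← hemrel ψ hψ d hdm]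
        _ = φ.1 ⟨star (m * n) * (m * n), hmn1⟩ * (em ψ).1 d := by
            rw [hval, mul_assoc]
    exact Subtype.ext (DFunLike.ext _ _ hpt)
  have part4a : IsNormalizer D (star n) := by
    intro d hd
    refine ⟨?_, ?_⟩
    · simpa [star_star] using (hn d hd).2
    · simpa [star_star] using (hn d hd).1
  refine ⟨part1, part2, part3, part4a, ?_⟩
  intro e' he' φ hφ
  have h1' : star (star n) * star n ∈ D := by simpa [star_star] using hn2
  have h2' : star n * star (star n) ∈ D := by simpa [star_star] using hn1
  obtain ⟨hesrc, hetgt, herel⟩ := he' h1' h2'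
  set ψ := en.symm φ with hψdef
  have hψsrc : ψ ∈ en.source := en.map_target hφ
  have hback : en ψ = φ := en.right_inv hφ
  have hψn : ψ.1 ⟨star n * n, hn1⟩ ≠ 0 := by rw [hensrc] at hψsrc; exact hψsrc
  have hφn : φ.1 ⟨n * star n, hn2⟩ ≠ 0 := by rw [hentgt] at hφ; exact hφ
  have hdnmem : star n * (n * star n) * n ∈ D := (hn _ hn2).2
  have r1 : ψ.1 ⟨star n * n, hn1⟩ * φ.1 ⟨n * star n, hn2⟩
      = ψ.1 ⟨star n * (n * star n) * n, hdnmem⟩ := by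
    have := henrel ψ hψsrc ⟨n * star n, hn2⟩ hdnmem
    rw [hback] at this
    exact this
  have r1' : ψ.1 ⟨star n * (n * star n) * n, hdnmem⟩
      = ψ.1 ⟨star n * n, hn1⟩ * ψ.1 ⟨star n * n, hn1⟩ := by
    rw [← charMulD]
    exact charCongr ψ (by noncomm_ring) _ _
  have hφval : φ.1 ⟨n * star n, hn2⟩ = ψ.1 ⟨star n * n, hn1⟩ :=
    mul_left_cancel₀ hψn (r1.trans r1')
  have hφsrc' : φ ∈ e'.source := by
    rw [hesrc]
    show φ.1 ⟨star (star n) * star n, h1'⟩ ≠ 0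
    rw [charCongr φ (by rw [star_star]) h1' hn2]
    exact hφn
  have hpt : ∀ d : D, (e' φ).1 d = ψ.1 d := by
    intro d
    have hd1 : star (star n) * (d : A) * star n ∈ D := by
      simpa [star_star] using (hn d d.2).1
    have hd1' : n * (d : A) * star n ∈ D := (hn d d.2).1
    have e1 := herel φ hφsrc' d hd1
    rw [charCongr φ (by rw [star_star]) h1' hn2,
        charCongr φ (by rw [star_star]) hd1 hd1'] at e1
    have hmid : star n * (n * (d : A) * star n) * n ∈ D := (hn _ hd1').2
    have r2 := henrel ψ hψsrc ⟨n * (d : A) * star n, hd1'⟩ hmid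
    rw [hback] at r2
    have r3 : ψ.1 ⟨star n * (n * (d : A) * star n) * n, hmid⟩
        = ψ.1 ⟨star n * n, hn1⟩ * (ψ.1 d * ψ.1 ⟨star n * n, hn1⟩) := by
      rw [← charMulD, ← charMulD]
      exact charCongr ψ (by noncomm_ring) _ _
    have r4 : φ.1 ⟨n * (d : A) * star n, hd1'⟩ = ψ.1 d * ψ.1 ⟨star n * n, hn1⟩ :=
      mul_left_cancel₀ hψn (r2.trans r3)
    rw [r4] at e1
    apply mul_left_cancel₀ hφn
    rw [e1, hφval]
    ring
  exact Subtype.ext (DFunLike.ext _ _ hpt)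
end

section
/- Let A be a separable C*-algebra and D a weakly Cartan subalgebra of A. Let n, m be normalisers of D in A and φ ∈ supp°(n*n) ∩ supp°(m*m), and suppose there is an open neighbourhood U of φ in D̂ with U ⊆ supp°(n*n) ∩ supp°(m*m) and α_n|_U = α_m|_U. Fix d ∈ D with supp°(d) ⊆ U and φ(d) = 1, and set w := φ(n*n)^{−1/2} φ(m*m)^{−1/2} d n* m d. Then w lies in the relative commutant D', π_φ(w) is a unitary element of the unital C*-algebra D'/J_φ, and π_φ(w) does not depend on the choices of U and d. -/
open WeakDual Filter Topology

universe u

/-- The relative commutant `D' = {a ∈ A : ad = da for all d ∈ D}` of `D` in `A`. -/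
def commutantSet {A : Type u} [NonUnitalCStarAlgebra A]
    (D : NonUnitalStarSubalgebra ℂ A) : Set A :=
  {a : A | ∀ d ∈ D, a * d = d * a}

/-- The ideal `J_φ = ker(φ)·D'` of `D'`: the closed linear span of products `d·a`
with `d ∈ D`, `φ(d) = 0` and `a ∈ D'`. -/
def Jphi {A : Type u} [NonUnitalCStarAlgebra A] (D : NonUnitalStarSubalgebra ℂ A)
    (φ : ↥(characterSpace ℂ D)) : Set A :=
  closure ((Submodule.span ℂ
    {x : A | ∃ d : D, φ.1 d = 0 ∧ ∃ a ∈ commutantSet D, x = (d : A) * a} : Submodule ℂ A) : Set A)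

/-- `e` represents the unit of the quotient `D'/J`. -/
def IsUnitMod {A : Type u} [NonUnitalCStarAlgebra A] (D : NonUnitalStarSubalgebra ℂ A)
    (e : A) (J : Set A) : Prop :=
  ∀ a ∈ commutantSet D, a * e - a ∈ J ∧ e * a - a ∈ J

/-- `D` is a weakly Cartan subalgebra of `A`: it is abelian, contains an approximate
unit for `A`, each quotient `D'/J_φ` is unital, and units can be represented locally
uniformly by elements of `D`. -/
def IsWeaklyCartan {A : Type u} [NonUnitalCStarAlgebra A]
    (D : NonUnitalStarSubalgebra ℂ A) : Prop :=
  (∀ a ∈ D, ∀ b ∈ D, a * b = b * a) ∧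
  HasApproxUnit D ∧
  (∀ φ : ↥(characterSpace ℂ D), ∃ e ∈ commutantSet D, IsUnitMod D e (Jphi D φ)) ∧
  (∀ φ : ↥(characterSpace ℂ D), ∃ d : D, ∃ U : Set ↥(characterSpace ℂ D),
    IsOpen U ∧ φ ∈ U ∧ ∀ ψ ∈ U, IsUnitMod D (d : A) (Jphi D ψ))

/-!
Since `D` is a closed commutative `*`-subalgebra, its characters separate its points, preserve `*`
and are nonnegative on `n*n`. At a character `ψ` with `α_n ψ = α_m ψ` the compression
`c ↦ m* n c n* m` of `D` acts as multiplication by `ψ(n*n) ψ(m*m)`. Used on `supp°(d) ⊆ U`, this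
makes every character vanish on `y* y` for `y = x c - c x`, `x = d n* m d`, `c ∈ D`, so `x ∈ D'`.
Used at `φ`, it shows that `w* w` and `w w*` are elements of `D` with value `1` at `φ`. Modulo
`J_φ` every `b ∈ D` acts on `D'` as the scalar `φ(b)`; this gives unitarity, and independence of
the choices because `d'² x = d² x'` for `x' = d' n* m d'`.
-/

namespace WeakDual.CharacterSpace

lemma map_star_of_nonUnital {B : Type*} [NonUnitalCStarAlgebra B] (χ : characterSpace ℂ B)
    (x : B) : χ (star x) = star (χ x) := by
  simpa using map_star (Unitization.lift (toNonUnitalAlgHom χ)) (x : Unitization ℂ B)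

lemma eq_zero_of_forall_apply_eq_zero {B : Type*} [NonUnitalCommCStarAlgebra B] {b : B}
    (h : ∀ χ : characterSpace ℂ B, χ b = 0) : b = 0 := by
  have hspec : spectrum ℂ (b : Unitization ℂ B) ⊆ {0} := by
    intro z hz
    obtain ⟨ψ, rfl⟩ := mem_spectrum_iff_exists.mp hz
    by_contra hψ
    let χ : WeakDual ℂ B := (ψ : WeakDual ℂ (Unitization ℂ B)).comp
      ⟨(Unitization.inrNonUnitalAlgHom ℂ B : B →ₗ[ℂ] Unitization ℂ B), Unitization.continuous_inr⟩
    refine hψ (h ⟨χ, fun h0 => hψ ?_, fun x y => ?_⟩)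
    · exact DFunLike.congr_fun h0 b
    · change ψ ((x * y : B) : Unitization ℂ B) = ψ (x : Unitization ℂ B) * ψ (y : Unitization ℂ B)
      rw [Unitization.inr_mul, map_mul]
  have hrad : spectralRadius ℂ (b : Unitization ℂ B) = 0 :=
    le_antisymm (iSup₂_le fun z hz => by simp [Set.mem_singleton_iff.mp (hspec hz)]) bot_le
  rw [IsStarNormal.spectralRadius_eq_nnnorm, Unitization.nnnorm_inr] at hrad
  simpa using hrad

end WeakDual.CharacterSpace

section ClosedSubalgebra

variable {A : Type u} [NonUnitalCStarAlgebra A] {D : NonUnitalStarSubalgebra ℂ A}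

lemma characterSpace_map_star (hDc : IsClosed (D : Set A)) (φ : characterSpace ℂ D) (x : D) :
    φ (star x) = star (φ x) :=
  haveI := hDc
  CharacterSpace.map_star_of_nonUnital φ x

lemma eq_zero_of_forall_characterSpace_apply_eq_zero (hDc : IsClosed (D : Set A))
    (hab : ∀ a ∈ D, ∀ b ∈ D, a * b = b * a) {z : D} (h : ∀ φ : characterSpace ℂ D, φ z = 0) :
    z = 0 :=
  haveI := hDc
  letI : NonUnitalCommCStarAlgebra D :=
    { (inferInstance : NonUnitalCStarAlgebra D) with
      mul_comm := fun x y => Subtype.ext (hab x x.2 y y.2) }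
  CharacterSpace.eq_zero_of_forall_apply_eq_zero h

open scoped ComplexOrder in
lemma characterSpace_apply_star_mul_self_nonneg (hDc : IsClosed (D : Set A))
    (φ : characterSpace ℂ D) {x : A} (hx : star x * x ∈ D) : 0 ≤ φ ⟨star x * x, hx⟩ := by
  have := hDc
  -- `A` has no order instance; the spectral order provides `CFC.sqrt`
  let _ := CStarAlgebra.spectralOrder A
  have := CStarAlgebra.spectralOrderedRing A
  have hx0 := star_mul_self_nonneg x
  have hsD : CFC.sqrt (star x * x) ∈ D := by
    rw [CFC.sqrt_eq_real_sqrt _ hx0]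
    exact cfcₙ_mem Real.sqrt hx
  have hsq : (⟨star x * x, hx⟩ : D) = star ⟨_, hsD⟩ * ⟨_, hsD⟩ := Subtype.ext <| by
    simp [(CFC.sqrt_nonneg (star x * x)).isSelfAdjoint.star_eq, CFC.sqrt_mul_sqrt_self _ hx0]
  rw [hsq, map_mul, characterSpace_map_star hDc]
  exact star_mul_self_nonneg _

end ClosedSubalgebra

section RelativeCommutant

variable {A : Type u} [NonUnitalCStarAlgebra A] {D : NonUnitalStarSubalgebra ℂ A}

def jphiSubmodule (D : NonUnitalStarSubalgebra ℂ A) (φ : characterSpace ℂ D) : Submodule ℂ A :=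
  (Submodule.span ℂ
    {x : A | ∃ d : D, φ.1 d = 0 ∧ ∃ a ∈ commutantSet D, x = (d : A) * a}).topologicalClosure

lemma IsWeaklyCartan.exists_isUnitMod (hwc : IsWeaklyCartan D) (φ : characterSpace ℂ D) :
    ∃ u : D, IsUnitMod D u (Jphi D φ) :=
  let ⟨u, _, _, hφU, hU⟩ := hwc.2.2.2 φ
  ⟨u, hU φ hφU⟩

variable {φ : characterSpace ℂ D}

lemma coe_jphiSubmodule : (jphiSubmodule D φ : Set A) = Jphi D φ := rfl

lemma mul_mem_Jphi_of_apply_eq_zero {b : D} (hb : φ b = 0) {a : A} (ha : a ∈ commutantSet D) :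
    (b : A) * a ∈ Jphi D φ :=
  subset_closure (Submodule.subset_span ⟨b, hb, a, ha, rfl⟩)

lemma mul_mem_Jphi (b : D) {x : A} (hx : x ∈ Jphi D φ) : (b : A) * x ∈ Jphi D φ := by
  suffices jphiSubmodule D φ ≤ (jphiSubmodule D φ).comap (LinearMap.mulLeft ℂ (b : A)) from
    this hx
  refine Submodule.topologicalClosure_minimal _ (Submodule.span_le.mpr ?_)
    ((Submodule.isClosed_topologicalClosure _).preimage (continuous_const_mul (b : A)))
  rintro _ ⟨c, hc, a, ha, rfl⟩
  rw [SetLike.mem_coe, Submodule.mem_comap, LinearMap.mulLeft_apply, ← mul_assoc]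
  exact mul_mem_Jphi_of_apply_eq_zero (b := b * c)
    (by rw [map_mul]; exact mul_eq_zero_of_right _ hc) ha

lemma exists_apply_eq_one_mul_sub_mem_Jphi (hu : ∃ u : D, IsUnitMod D u (Jphi D φ)) :
    ∃ v : D, φ v = 1 ∧ ∀ a ∈ commutantSet D, (v : A) * a - a ∈ Jphi D φ := by
  obtain ⟨u, hu⟩ := hu
  obtain ⟨x, hx⟩ := DFunLike.ne_iff.mp φ.2.1
  replace hx : φ x ≠ 0 := hx
  set d : D := (φ x)⁻¹ • x
  have hd : φ d = 1 := by simp [d, inv_mul_cancel₀ hx]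
  refine ⟨d + u - d * u, by simp [map_mul, hd], fun a ha => ?_⟩
  have h : ((d + u - d * u : D) : A) * a - a = ((u : A) * a - a) - (d : A) * ((u : A) * a - a) := by
    push_cast; noncomm_ring
  rw [h, ← coe_jphiSubmodule]
  exact sub_mem (hu a ha).2 (mul_mem_Jphi d (hu a ha).2)

lemma mul_sub_smul_mem_Jphi (hu : ∃ u : D, IsUnitMod D u (Jphi D φ)) (b : D) {x : A}
    (hx : x ∈ commutantSet D) : (b : A) * x - φ b • x ∈ Jphi D φ := by
  obtain ⟨v, hv, hvx⟩ := exists_apply_eq_one_mul_sub_mem_Jphi hu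
  have h : (b : A) * x - φ b • x = ((b - φ b • v : D) : A) * x + φ b • ((v : A) * x - x) := by
    push_cast
    simp only [sub_mul, smul_mul_assoc, smul_sub]
    abel
  rw [h, ← coe_jphiSubmodule]
  exact add_mem (mul_mem_Jphi_of_apply_eq_zero (by simp [hv]) hx)
    (Submodule.smul_mem _ _ (hvx x hx))

lemma sub_mem_Jphi_of_apply_eq_one (hab : ∀ a ∈ D, ∀ b ∈ D, a * b = b * a)
    (hu : ∃ u : D, IsUnitMod D u (Jphi D φ)) {b : D} (hb : φ b = 1) {e : A}
    (he : e ∈ commutantSet D) (heU : IsUnitMod D e (Jphi D φ)) : (b : A) - e ∈ Jphi D φ := by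
  have h : (b : A) - e = ((b : A) * e - φ b • e) - ((b : A) * e - b) := by
    rw [hb, one_smul]; abel
  rw [h, ← coe_jphiSubmodule]
  exact sub_mem (mul_sub_smul_mem_Jphi hu b he) (heU b (hab b b.2)).1

lemma mul_mul_sub_mul_mul_mem_Jphi (hu : ∃ u : D, IsUnitMod D u (Jphi D φ)) (t : A) {d d' : D}
    (hdd' : (d : A) * d' = d' * d) (hd : φ d = 1) (hd' : φ d' = 1)
    (hx : (d : A) * t * d ∈ commutantSet D) (hx' : (d' : A) * t * d' ∈ commutantSet D) :
    (d : A) * t * d - d' * t * d' ∈ Jphi D φ := by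
  have hswap : ((d * d : D) : A) * (d' * t * d') = ((d' * d' : D) : A) * (d * t * d) := by
    have h1 := hx d' d'.2
    have h2 := hx' d d.2
    push_cast
    calc (d : A) * d * (d' * t * d') = d * (d' * t * d' * d) := by rw [h2]; noncomm_ring
      _ = d' * (d * t * d * d') := by simp only [← mul_assoc, hdd']; simp only [mul_assoc, hdd']
      _ = d' * d' * (d * t * d) := by rw [h1]; noncomm_ring
  have h : (d : A) * t * d - d' * t * d' =
      (((d * d : D) : A) * (d' * t * d') - φ (d * d) • (d' * t * d')) -
        (((d' * d' : D) : A) * (d * t * d) - φ (d' * d') • (d * t * d)) := by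
    rw [hswap, map_mul, map_mul, hd, hd', one_mul, one_smul, one_smul]; abel
  rw [h, ← coe_jphiSubmodule]
  exact sub_mem (mul_sub_smul_mem_Jphi hu _ hx') (mul_sub_smul_mem_Jphi hu _ hx)

end RelativeCommutant

section Normalizers

variable {A : Type u} [NonUnitalCStarAlgebra A] {D : NonUnitalStarSubalgebra ℂ A} {n m : A}

lemma IsNormalizer.mul_star_mem (hDc : IsClosed (D : Set A)) (hD : HasApproxUnit D)
    (hn : IsNormalizer D n) : n * star n ∈ D := by
  obtain ⟨ι, l, e, hl, heD, he⟩ := hD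
  refine hDc.mem_of_tendsto ((he (star n)).1.const_mul n) (Eventually.of_forall fun i => ?_)
  simpa only [mul_assoc, SetLike.mem_coe] using (hn (e i) (heD i)).1

lemma IsAlphaFor.apply_conj {α : PartialHomeomorph (characterSpace ℂ D) (characterSpace ℂ D)}
    (hα : IsAlphaFor D n α) (hn : IsNormalizer D n) (hn1 : star n * n ∈ D)
    (hn2 : n * star n ∈ D) {ψ : characterSpace ℂ D} (hψ : ψ ∈ suppo D ⟨star n * n, hn1⟩)
    (c : D) : α ψ ⟨n * c * star n, (hn c c.2).1⟩ = ψ c * ψ ⟨star n * n, hn1⟩ := by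
  obtain ⟨hsrc, -, hval⟩ := hα hn1 hn2
  have hconj : star n * (n * c * star n) * n = (star n * n) * c * (star n * n) := by
    simp only [mul_assoc]
  have h := hval ψ (hsrc ▸ hψ) ⟨n * c * star n, (hn c c.2).1⟩
    (hconj ▸ mul_mem (mul_mem hn1 c.2) hn1)
  have hψ' : ψ ⟨star n * n, hn1⟩ ≠ 0 := hψ
  simp only [hconj, CharacterSpace.coe_coe] at h
  apply mul_left_cancel₀ hψ'
  rw [h]
  change ψ (⟨star n * n, hn1⟩ * c * ⟨star n * n, hn1⟩) = _
  rw [map_mul, map_mul]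
  ring

def IsNormalizer.sandwich (hn : IsNormalizer D n) (hm : IsNormalizer D m) (c : D) : D :=
  ⟨star m * (n * c * star n) * m, (hm _ (hn c c.2).1).2⟩

lemma IsNormalizer.apply_sandwich (hn : IsNormalizer D n) (hm : IsNormalizer D m)
    (hn1 : star n * n ∈ D) (hm1 : star m * m ∈ D) (hn2 : n * star n ∈ D) (hm2 : m * star m ∈ D)
    {αn αm : PartialHomeomorph (characterSpace ℂ D) (characterSpace ℂ D)}
    (hαn : IsAlphaFor D n αn) (hαm : IsAlphaFor D m αm) {ψ : characterSpace ℂ D}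
    (hψ : ψ ∈ suppo D ⟨star n * n, hn1⟩ ∩ suppo D ⟨star m * m, hm1⟩) (heq : αn ψ = αm ψ)
    (c : D) :
    ψ (hn.sandwich hm c) = ψ ⟨star n * n, hn1⟩ * ψ ⟨star m * m, hm1⟩ * ψ c := by
  obtain ⟨hsrc, -, hval⟩ := hαm hm1 hm2
  have h := hval ψ (hsrc ▸ hψ.2) ⟨n * c * star n, (hn c c.2).1⟩ (hn.sandwich hm c).2
  simp only [CharacterSpace.coe_coe, ← heq, hαn.apply_conj hn hn1 hn2 hψ.1] at h
  rw [IsNormalizer.sandwich, ← h]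
  ring

lemma IsNormalizer.star_mul_mul_mul_mul_eq_sandwich (hn : IsNormalizer D n)
    (hm : IsNormalizer D m) (a b r s : D) :
    star ((a : A) * star n * m * b) * (r * star n * m * s) =
      ((star b * hn.sandwich hm (star a * r) * s : D) : A) := by
  simp [IsNormalizer.sandwich, star_mul, mul_assoc]

lemma mul_star_mul_mul_mem_commutantSet (hDc : IsClosed (D : Set A))
    (hab : ∀ a ∈ D, ∀ b ∈ D, a * b = b * a) (hn : IsNormalizer D n) (hm : IsNormalizer D m)
    (hn1 : star n * n ∈ D) (hm1 : star m * m ∈ D) (hn2 : n * star n ∈ D) (hm2 : m * star m ∈ D)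
    {αn αm : PartialHomeomorph (characterSpace ℂ D) (characterSpace ℂ D)}
    (hαn : IsAlphaFor D n αn) (hαm : IsAlphaFor D m αm) {U : Set (characterSpace ℂ D)}
    (hUsub : U ⊆ suppo D ⟨star n * n, hn1⟩ ∩ suppo D ⟨star m * m, hm1⟩)
    (hUeq : Set.EqOn αn αm U) (d : D) (hd : suppo D d ⊆ U) :
    (d : A) * star n * m * d ∈ commutantSet D := by
  intro c hc
  -- with `q = d c` the commutator `x c - c x` is `d n* m q - q n* m d`
  set q : D := d * ⟨c, hc⟩
  set W : D → D → D → D → D := fun a b r s => star b * hn.sandwich hm (star a * r) * s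
  set S : D := W d q d q - W d q q d - W q d d q + W q d q d
  have hS : ∀ ψ : characterSpace ℂ D, ψ S = 0 := by
    intro ψ
    have hW : ∀ a b r s, ψ (W a b r s) = ψ (star b) * ψ (hn.sandwich hm (star a * r)) * ψ s := by
      simp [W, map_mul]
    by_cases hψd : ψ d = 0
    · have hψq : ψ q = 0 := by simp [q, map_mul, hψd]
      simp [S, hW, hψd, hψq]
    · have hψU := hd hψd
      simp only [S, map_add, map_sub, hW,
        hn.apply_sandwich hm hn1 hm1 hn2 hm2 hαn hαm (hUsub hψU) (hUeq hψU), map_mul]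
      ring
  have hxc : (d : A) * star n * m * d * c = d * star n * m * q := by
    simp [q, mul_assoc]
  have hcx : c * ((d : A) * star n * m * d) = q * star n * m * d := by
    simp [q, ← mul_assoc, hab c hc d d.2]
  rw [← sub_eq_zero, ← CStarRing.star_mul_self_eq_zero_iff, hxc, hcx, star_sub, sub_mul, mul_sub,
    mul_sub]
  simp only [hn.star_mul_mul_mul_mul_eq_sandwich hm]
  have := congrArg ((↑) : D → A) (eq_zero_of_forall_characterSpace_apply_eq_zero hDc hab hS)
  push_cast [S] at this
  rw [← this]
  abel

end Normalizers

open scoped ComplexOrder in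
lemma star_cpow_neg_half_mul_cpow_neg_half_mul_self {a : ℂ} (ha : 0 < a) :
    star (a ^ (-(1 / 2) : ℂ)) * a ^ (-(1 / 2) : ℂ) * a = 1 := by
  obtain ⟨r, hr, rfl⟩ : ∃ r : ℝ, 0 < r ∧ (r : ℂ) = a :=
    ⟨a.re, by simpa using (Complex.pos_iff.mp ha).1,
      (Complex.eq_re_of_ofReal_le (r := 0) (by simpa using ha.le)).symm⟩
  have hreal : (r : ℂ) ^ (-(1 / 2) : ℂ) = ((r ^ (-(1 / 2) : ℝ) : ℝ) : ℂ) := by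
    rw [Complex.ofReal_cpow hr.le]
    norm_num
  rw [hreal, Complex.star_def, Complex.conj_ofReal]
  norm_cast
  rw [← Real.rpow_add hr, ← Real.rpow_add_one hr.ne']
  norm_num

open scoped ComplexOrder in
lemma star_mul_self_mul_eq_one_of_cpow_neg_half {a b : ℂ} (ha : 0 < a) (hb : 0 < b) :
    star (a ^ (-(1 / 2) : ℂ) * b ^ (-(1 / 2) : ℂ)) * (a ^ (-(1 / 2) : ℂ) * b ^ (-(1 / 2) : ℂ)) *
      (a * b) = 1 := by
  rw [star_mul']
  linear_combination (star (b ^ (-(1 / 2) : ℂ)) * b ^ (-(1 / 2) : ℂ) * b) *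
    star_cpow_neg_half_mul_cpow_neg_half_mul_self ha +
      star_cpow_neg_half_mul_cpow_neg_half_mul_self hb

section Unitary

variable {A : Type u} [NonUnitalCStarAlgebra A] {D : NonUnitalStarSubalgebra ℂ A} {n m : A}
  {φ : characterSpace ℂ D}

lemma star_smul_mul_smul_sub_mem_Jphi (hDc : IsClosed (D : Set A))
    (hab : ∀ a ∈ D, ∀ b ∈ D, a * b = b * a) (hu : ∃ u : D, IsUnitMod D u (Jphi D φ))
    (hn : IsNormalizer D n) (hm : IsNormalizer D m)
    (hn1 : star n * n ∈ D) (hm1 : star m * m ∈ D) (hn2 : n * star n ∈ D) (hm2 : m * star m ∈ D)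
    {αn αm : PartialHomeomorph (characterSpace ℂ D) (characterSpace ℂ D)}
    (hαn : IsAlphaFor D n αn) (hαm : IsAlphaFor D m αm)
    (hφ : φ ∈ suppo D ⟨star n * n, hn1⟩ ∩ suppo D ⟨star m * m, hm1⟩) (heq : αn φ = αm φ)
    {d : D} (hd : φ d = 1) {γ : ℂ}
    (hγ : star γ * γ * (φ ⟨star n * n, hn1⟩ * φ ⟨star m * m, hm1⟩) = 1)
    {e : A} (he : e ∈ commutantSet D) (heU : IsUnitMod D e (Jphi D φ)) :
    star (γ • ((d : A) * star n * m * d)) * (γ • ((d : A) * star n * m * d)) - e ∈ Jphi D φ := by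
  have h : star (γ • ((d : A) * star n * m * d)) * (γ • ((d : A) * star n * m * d)) =
      (((star γ * γ) • (star d * hn.sandwich hm (star d * d) * d) : D) : A) := by
    rw [star_smul, smul_mul_smul_comm, hn.star_mul_mul_mul_mul_eq_sandwich hm]
    rfl
  rw [h]
  refine sub_mem_Jphi_of_apply_eq_one hab hu ?_ he heU
  simp only [map_smul, map_mul, hn.apply_sandwich hm hn1 hm1 hn2 hm2 hαn hαm hφ heq,
    characterSpace_map_star hDc, hd, star_one, smul_eq_mul]
  linear_combination hγ

lemma smul_mul_star_smul_sub_mem_Jphi (hDc : IsClosed (D : Set A))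
    (hab : ∀ a ∈ D, ∀ b ∈ D, a * b = b * a) (hu : ∃ u : D, IsUnitMod D u (Jphi D φ))
    (hn : IsNormalizer D n) (hm : IsNormalizer D m)
    (hn1 : star n * n ∈ D) (hm1 : star m * m ∈ D) (hn2 : n * star n ∈ D) (hm2 : m * star m ∈ D)
    {αn αm : PartialHomeomorph (characterSpace ℂ D) (characterSpace ℂ D)}
    (hαn : IsAlphaFor D n αn) (hαm : IsAlphaFor D m αm)
    (hφ : φ ∈ suppo D ⟨star n * n, hn1⟩ ∩ suppo D ⟨star m * m, hm1⟩) (heq : αn φ = αm φ)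
    {d : D} (hd : φ d = 1) {γ : ℂ}
    (hγ : star γ * γ * (φ ⟨star n * n, hn1⟩ * φ ⟨star m * m, hm1⟩) = 1)
    {e : A} (he : e ∈ commutantSet D) (heU : IsUnitMod D e (Jphi D φ)) :
    (γ • ((d : A) * star n * m * d)) * star (γ • ((d : A) * star n * m * d)) - e ∈ Jphi D φ := by
  have h : star (γ • ((d : A) * star n * m * d)) =
      star γ • (((star d : D) : A) * star m * n * star d) := by
    simp [star_mul, mul_assoc]
  have := star_smul_mul_smul_sub_mem_Jphi hDc hab hu hm hn hm1 hn1 hm2 hn2 hαm hαn ⟨hφ.2, hφ.1⟩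
    heq.symm (d := star d) (by rw [characterSpace_map_star hDc, hd, star_one]) (γ := star γ)
    (by rw [star_star, mul_comm γ, mul_comm (φ _)]; exact hγ) he heU
  rwa [← h, star_star] at this

end Unitary

theorem stmt14_general {A : Type u} [NonUnitalCStarAlgebra A]
    (D : NonUnitalStarSubalgebra ℂ A) (hDc : IsClosed (D : Set A))
    (hwc : IsWeaklyCartan D)
    (n m : A) (hn : IsNormalizer D n) (hm : IsNormalizer D m)
    (hn1 : star n * n ∈ D) (hm1 : star m * m ∈ D)
    (en em : PartialHomeomorph ↥(characterSpace ℂ D) ↥(characterSpace ℂ D))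
    (hen : IsAlphaFor D n en) (hem : IsAlphaFor D m em)
    (φ : ↥(characterSpace ℂ D))
    (hφ : φ ∈ suppo D ⟨star n * n, hn1⟩ ∩ suppo D ⟨star m * m, hm1⟩)
    (U : Set ↥(characterSpace ℂ D)) (hφU : φ ∈ U)
    (hUsub : U ⊆ suppo D ⟨star n * n, hn1⟩ ∩ suppo D ⟨star m * m, hm1⟩)
    (hUeq : Set.EqOn (⇑en) (⇑em) U)
    (d : D) (hd : suppo D d ⊆ U) (hd1 : φ.1 d = 1) :
    ∃ w : A,
      w = (φ.1 ⟨star n * n, hn1⟩ ^ (-(1/2) : ℂ) * φ.1 ⟨star m * m, hm1⟩ ^ (-(1/2) : ℂ)) •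
            ((d : A) * star n * m * (d : A)) ∧
      -- w lies in the relative commutant D'
      w ∈ commutantSet D ∧
      -- π_φ(w) is a unitary in the unital C*-algebra D'/J_φ
      (∀ e ∈ commutantSet D, IsUnitMod D e (Jphi D φ) →
        star w * w - e ∈ Jphi D φ ∧ w * star w - e ∈ Jphi D φ) ∧
      -- π_φ(w) does not depend on the choices of U and d
      (∀ (U' : Set ↥(characterSpace ℂ D)) (d' : D), IsOpen U' → φ ∈ U' →
        U' ⊆ suppo D ⟨star n * n, hn1⟩ ∩ suppo D ⟨star m * m, hm1⟩ →
        Set.EqOn (⇑en) (⇑em) U' → suppo D d' ⊆ U' → φ.1 d' = 1 →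
        w - (φ.1 ⟨star n * n, hn1⟩ ^ (-(1/2) : ℂ) * φ.1 ⟨star m * m, hm1⟩ ^ (-(1/2) : ℂ)) •
              ((d' : A) * star n * m * (d' : A)) ∈ Jphi D φ) := by
  have hab := hwc.1
  have hu := hwc.exists_isUnitMod φ
  have hn2 := hn.mul_star_mem hDc hwc.2.1
  have hm2 := hm.mul_star_mem hDc hwc.2.1
  have hx := mul_star_mul_mul_mem_commutantSet hDc hab hn hm hn1 hm1 hn2 hm2 hen hem hUsub hUeq d hd
  set γ := φ.1 ⟨star n * n, hn1⟩ ^ (-(1/2) : ℂ) * φ.1 ⟨star m * m, hm1⟩ ^ (-(1/2) : ℂ)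
  have hγ : star γ * γ * (φ ⟨star n * n, hn1⟩ * φ ⟨star m * m, hm1⟩) = 1 :=
    open scoped ComplexOrder in star_mul_self_mul_eq_one_of_cpow_neg_half
      ((characterSpace_apply_star_mul_self_nonneg hDc φ hn1).lt_of_ne (Ne.symm hφ.1))
      ((characterSpace_apply_star_mul_self_nonneg hDc φ hm1).lt_of_ne (Ne.symm hφ.2))
  refine ⟨γ • ((d : A) * star n * m * d), rfl, fun c hc => ?_, fun e he heU => ⟨?_, ?_⟩, ?_⟩
  · rw [smul_mul_assoc, hx c hc, mul_smul_comm]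
  · exact star_smul_mul_smul_sub_mem_Jphi hDc hab hu hn hm hn1 hm1 hn2 hm2 hen hem hφ
      (hUeq hφU) hd1 hγ he heU
  · exact smul_mul_star_smul_sub_mem_Jphi hDc hab hu hn hm hn1 hm1 hn2 hm2 hen hem hφ
      (hUeq hφU) hd1 hγ he heU
  · intro U' d' _ _ hU'sub hU'eq hd' hd'1
    have hassoc (b : D) : (b : A) * star n * m * b = b * (star n * m) * b := by
      rw [mul_assoc (b : A)]
    have hx' := mul_star_mul_mul_mem_commutantSet hDc hab hn hm hn1 hm1 hn2 hm2 hen hem hU'sub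
      hU'eq d' hd'
    rw [← smul_sub, hassoc, hassoc]
    rw [hassoc] at hx hx'
    exact (jphiSubmodule D φ).smul_mem γ <|
      mul_mul_sub_mul_mul_mem_Jphi hu _ (hab _ d.2 _ d'.2) hd1 hd'1 hx hx'

theorem stmt14 {A : Type u} [NonUnitalCStarAlgebra A] [TopologicalSpace.SeparableSpace A]
    (D : NonUnitalStarSubalgebra ℂ A) (hDc : IsClosed (D : Set A))
    (hwc : IsWeaklyCartan D)
    (n m : A) (hn : IsNormalizer D n) (hm : IsNormalizer D m)
    (hn1 : star n * n ∈ D) (hm1 : star m * m ∈ D)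
    (en em : PartialHomeomorph ↥(characterSpace ℂ D) ↥(characterSpace ℂ D))
    (hen : IsAlphaFor D n en) (hem : IsAlphaFor D m em)
    (φ : ↥(characterSpace ℂ D))
    (hφ : φ ∈ suppo D ⟨star n * n, hn1⟩ ∩ suppo D ⟨star m * m, hm1⟩)
    (U : Set ↥(characterSpace ℂ D)) (hUo : IsOpen U) (hφU : φ ∈ U)
    (hUsub : U ⊆ suppo D ⟨star n * n, hn1⟩ ∩ suppo D ⟨star m * m, hm1⟩)
    (hUeq : Set.EqOn (⇑en) (⇑em) U)
    (d : D) (hd : suppo D d ⊆ U) (hd1 : φ.1 d = 1) :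
    ∃ w : A,
      w = (φ.1 ⟨star n * n, hn1⟩ ^ (-(1/2) : ℂ) * φ.1 ⟨star m * m, hm1⟩ ^ (-(1/2) : ℂ)) •
            ((d : A) * star n * m * (d : A)) ∧
      -- w lies in the relative commutant D'
      w ∈ commutantSet D ∧
      -- π_φ(w) is a unitary in the unital C*-algebra D'/J_φ
      (∀ e ∈ commutantSet D, IsUnitMod D e (Jphi D φ) →
        star w * w - e ∈ Jphi D φ ∧ w * star w - e ∈ Jphi D φ) ∧
      -- π_φ(w) does not depend on the choices of U and d
      (∀ (U' : Set ↥(characterSpace ℂ D)) (d' : D), IsOpen U' → φ ∈ U' →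
        U' ⊆ suppo D ⟨star n * n, hn1⟩ ∩ suppo D ⟨star m * m, hm1⟩ →
        Set.EqOn (⇑en) (⇑em) U' → suppo D d' ⊆ U' → φ.1 d' = 1 →
        w - (φ.1 ⟨star n * n, hn1⟩ ^ (-(1/2) : ℂ) * φ.1 ⟨star m * m, hm1⟩ ^ (-(1/2) : ℂ)) •
              ((d' : A) * star n * m * (d' : A)) ∈ Jphi D φ) :=
  stmt14_general D hDc hwc n m hn hm hn1 hm1 en em hen hem φ hφ U hφU hUsub hUeq d hd hd1
end

section
/- Let A be a separable C*-algebra and D a maximal abelian C*-subalgebra of A containing an approximate unit for A. Then D is a weakly Cartan subalgebra of A: the relative commutant D' equals D, for each character φ of D the ideal J_φ equals ker(φ) and the quotient D/ker(φ) is unital (isomorphic to ℂ), and for each character φ of D there exist d ∈ D and an open neighbourhood U of φ in D̂ such that ψ(d) = 1 for all ψ ∈ U. -/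
open WeakDual Filter Topology

universe u

/-!
For a self-adjoint `y` in the relative commutant `D'`, the set `D ∪ {y}` is commuting and
star-closed, so its double centralizer is a closed abelian C⋆-subalgebra containing `D`; by
maximality `y ∈ D`, and splitting into real and imaginary parts gives `D' = D`. Then `J_φ` is the
closed span of `ker φ · D`: it lies in the closed ideal `ker φ`, and it contains every `d ∈ ker φ`
as the limit of `d eᵢ` along the approximate unit. So `D'/J_φ = D/ker φ ≅ ℂ`, and any `d ∈ D`
with `φ d = 1` represents its unit. Finally, if `φ (e⋆e) = 1`, the functional calculus element
`d = f(e⋆e)` with `f t = min (2t) 1` satisfies `ψ d = 1` wherever `Re ψ (e⋆e) > 1/2`.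
-/

namespace WeakDual.CharacterSpace

variable {B : Type*} [NonUnitalCStarAlgebra B]

/-- Characters extend to unital characters of the unitization, and those are star maps. -/
lemma apply_star (φ : characterSpace ℂ B) (b : B) : φ (star b) = star (φ b) := by
  let _ : StarHomClass (Unitization ℂ B →ₐ[ℂ] ℂ) (Unitization ℂ B) ℂ :=
    AlgHomClass.instStarHomClass
  simpa using map_star (Unitization.lift (toNonUnitalAlgHom φ)) (b : Unitization ℂ B)

noncomputable def toNonUnitalStarAlgHom (φ : characterSpace ℂ B) : B →⋆ₙₐ[ℂ] ℂ :=
  { toNonUnitalAlgHom φ with map_star' := apply_star φ }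

lemma exists_apply_eq_one (φ : characterSpace ℂ B) : ∃ b : B, φ b = 1 := by
  obtain ⟨b, hb⟩ : ∃ b : B, φ b ≠ 0 := by
    by_contra! h
    exact φ.2.1 (ContinuousLinearMap.ext h)
  exact ⟨(φ b)⁻¹ • b, by rw [map_smul, smul_eq_mul, inv_mul_cancel₀ hb]⟩

lemma apply_cfcₙ_of_isSelfAdjoint (ψ : characterSpace ℂ B) {f : ℝ → ℝ} (hf : Continuous f)
    (hf0 : f 0 = 0) {x : B} (hx : IsSelfAdjoint x) : ψ (cfcₙ f x) = f (ψ x).re := by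
  have hψx : IsSelfAdjoint (ψ x) := by
    rw [IsSelfAdjoint, ← apply_star, hx.star_eq]
  have h := NonUnitalStarAlgHom.map_cfcₙ (toNonUnitalStarAlgHom ψ) f x hf.continuousOn hf0
    (map_continuous ψ) hx hψx
  change ψ (cfcₙ f x) = cfcₙ f (ψ x) at h
  rw [h, ← Complex.conj_eq_iff_re.mp hψx.star_eq, ← Complex.coe_algebraMap, cfcₙ_eq_cfc,
    cfc_algebraMap]
  rfl

lemma exists_eventually_apply_eq_one (φ : characterSpace ℂ B) :
    ∃ d : B, ∀ᶠ ψ in 𝓝 φ, (ψ : characterSpace ℂ B) d = 1 := by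
  obtain ⟨e, he⟩ := exists_apply_eq_one φ
  have hφx : φ (star e * e) = 1 := by rw [map_mul, apply_star, he, star_one, one_mul]
  have hf : Continuous fun t : ℝ => min (2 * t) 1 := by fun_prop
  refine ⟨cfcₙ (fun t : ℝ => min (2 * t) 1) (star e * e), ?_⟩
  have hre : Continuous fun ψ : characterSpace ℂ B => (ψ (star e * e)).re :=
    Complex.continuous_re.comp ((eval_continuous _).comp continuous_subtype_val)
  filter_upwards [hre.continuousAt.eventually_const_lt (show (1 / 2 : ℝ) < (φ (star e * e)).re
    by norm_num [hφx])] with ψ hψ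
  rw [apply_cfcₙ_of_isSelfAdjoint ψ hf (by simp) (.star_mul_self e), min_eq_right (by linarith)]
  simp

end WeakDual.CharacterSpace

namespace NonUnitalStarSubalgebra

variable {A : Type*} [NonUnitalCStarAlgebra A] (C : NonUnitalStarSubalgebra ℂ A) {a : A}

lemma realPart_mem (ha : a ∈ C) : (realPart a : A) ∈ C := by
  rw [realPart_apply_coe, ← algebraMap_smul ℂ]
  exact SMulMemClass.smul_mem _ (add_mem ha (star_mem ha))

lemma imaginaryPart_mem (ha : a ∈ C) : (imaginaryPart a : A) ∈ C := by
  rw [imaginaryPart_apply_coe]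
  refine SMulMemClass.smul_mem _ ?_
  rw [← algebraMap_smul ℂ]
  exact SMulMemClass.smul_mem _ (sub_mem ha (star_mem ha))

end NonUnitalStarSubalgebra

section Commutant

variable {A : Type u} [NonUnitalCStarAlgebra A] {D : NonUnitalStarSubalgebra ℂ A}

lemma commutantSet_eq_centralizer :
    commutantSet D = NonUnitalStarSubalgebra.centralizer ℂ (D : Set A) := by
  ext a
  rw [SetLike.mem_coe, NonUnitalStarSubalgebra.mem_centralizer_iff]
  exact ⟨fun ha d hd => ⟨(ha d hd).symm, (ha _ (star_mem hd)).symm⟩,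
    fun ha d hd => (ha d hd).1.symm⟩

lemma subset_of_maximal_abelian
    (hmax : ∀ E : NonUnitalStarSubalgebra ℂ A, IsClosed (E : Set A) →
      (∀ a ∈ E, ∀ b ∈ E, a * b = b * a) → D ≤ E → D = E)
    {S : Set A} (hDS : (D : Set A) ⊆ S) (hS : ∀ x ∈ S, ∀ y ∈ S, x * y = y * x)
    (hstar : ∀ x ∈ S, star x ∈ S) : S ⊆ D := by
  set E := NonUnitalStarSubalgebra.centralizer ℂ
    (NonUnitalStarSubalgebra.centralizer ℂ S : Set A)
  have hE : (E : Set A) = S.centralizer.centralizer := by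
    rw [NonUnitalStarSubalgebra.coe_centralizer_centralizer,
      Set.union_eq_left.2 fun x hx => by simpa using hstar _ hx]
  have hSE : S ⊆ E := hE ▸ Set.subset_centralizer_centralizer
  have hEcomm : ∀ a ∈ E, ∀ b ∈ E, a * b = b * a := fun a ha b hb =>
    Set.centralizer_centralizer_comm_of_comm hS a (hE ▸ ha) b (hE ▸ hb)
  rw [hmax E (hE ▸ Set.isClosed_centralizer _) hEcomm (hDS.trans hSE)]
  exact hSE

lemma mem_of_isSelfAdjoint_of_mem_commutantSet (hab : ∀ a ∈ D, ∀ b ∈ D, a * b = b * a)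
    (hmax : ∀ E : NonUnitalStarSubalgebra ℂ A, IsClosed (E : Set A) →
      (∀ a ∈ E, ∀ b ∈ E, a * b = b * a) → D ≤ E → D = E)
    {y : A} (hy : y ∈ commutantSet D) (hsa : IsSelfAdjoint y) : y ∈ D := by
  refine subset_of_maximal_abelian hmax (Set.subset_insert y D) ?_ ?_ (Set.mem_insert y D)
  · rintro a (rfl | ha) b (rfl | hb)
    exacts [rfl, hy b hb, (hy a ha).symm, hab a ha b hb]
  · rintro a (rfl | ha)
    exacts [Or.inl hsa.star_eq, Or.inr (star_mem ha)]

lemma commutantSet_eq (hab : ∀ a ∈ D, ∀ b ∈ D, a * b = b * a)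
    (hmax : ∀ E : NonUnitalStarSubalgebra ℂ A, IsClosed (E : Set A) →
      (∀ a ∈ E, ∀ b ∈ E, a * b = b * a) → D ≤ E → D = E) :
    commutantSet D = D := by
  refine Set.Subset.antisymm (fun a ha => ?_) fun a ha d hd => hab a ha d hd
  have hD' {y : A} (hy : y ∈ NonUnitalStarSubalgebra.centralizer ℂ (D : Set A))
      (hsa : IsSelfAdjoint y) : y ∈ D :=
    mem_of_isSelfAdjoint_of_mem_commutantSet hab hmax (commutantSet_eq_centralizer (D := D) ▸ hy) hsa
  rw [commutantSet_eq_centralizer] at ha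
  rw [SetLike.mem_coe, ← realPart_add_I_smul_imaginaryPart a]
  exact add_mem (hD' (NonUnitalStarSubalgebra.realPart_mem _ ha) (realPart a).2)
    (SMulMemClass.smul_mem _ (hD' (NonUnitalStarSubalgebra.imaginaryPart_mem _ ha) (imaginaryPart a).2))

end Commutant

section Jphi

variable {A : Type u} [NonUnitalCStarAlgebra A] {D : NonUnitalStarSubalgebra ℂ A}

lemma isClosed_image_ker (hDc : IsClosed (D : Set A)) (φ : characterSpace ℂ D) :
    IsClosed ((↑) '' {d : D | φ d = 0} : Set A) :=
  hDc.isClosedEmbedding_subtypeVal.isClosedMap _ (isClosed_singleton.preimage (map_continuous φ))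

lemma Jphi_subset_image_ker (hDc : IsClosed (D : Set A)) (hcomm : commutantSet D = D)
    (φ : characterSpace ℂ D) : Jphi D φ ⊆ (↑) '' {d : D | φ d = 0} := by
  refine closure_minimal (fun x hx => ?_) (isClosed_image_ker hDc φ)
  induction hx using Submodule.span_induction with
  | mem x hx =>
    obtain ⟨d, hd, a, ha, rfl⟩ := hx
    rw [hcomm] at ha
    exact ⟨d * ⟨a, ha⟩, (map_mul φ d _).trans (mul_eq_zero_of_left hd _), rfl⟩
  | zero => exact ⟨0, map_zero φ, rfl⟩
  | add x y _ _ hx hy =>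
    obtain ⟨⟨d, hd, rfl⟩, ⟨e, he, rfl⟩⟩ := And.intro hx hy
    exact ⟨d + e, by simp_all, rfl⟩
  | smul c x _ hx =>
    obtain ⟨d, hd, rfl⟩ := hx
    exact ⟨c • d, by simp_all, rfl⟩

lemma image_ker_subset_Jphi (hab : ∀ a ∈ D, ∀ b ∈ D, a * b = b * a) (hau : HasApproxUnit D)
    (φ : characterSpace ℂ D) : (↑) '' {d : D | φ d = 0} ⊆ Jphi D φ := by
  rintro _ ⟨d, hd, rfl⟩
  obtain ⟨ι, l, e, hl, heD, hconv⟩ := hau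
  exact mem_closure_of_tendsto (hconv d).2 (Eventually.of_forall fun i =>
    Submodule.subset_span ⟨d, hd, e i, fun x hx => hab _ (heD i) x hx, rfl⟩)

lemma isUnitMod_of_apply_eq_one (hcomm : commutantSet D = D) {φ : characterSpace ℂ D}
    (hJ : Jphi D φ = (↑) '' {d : D | φ d = 0}) {e : D} (he : φ e = 1) :
    IsUnitMod D e (Jphi D φ) := by
  intro a ha
  rw [hcomm] at ha
  rw [hJ]
  exact ⟨⟨⟨a, ha⟩ * e - ⟨a, ha⟩, by simp [he], rfl⟩, ⟨e * ⟨a, ha⟩ - ⟨a, ha⟩, by simp [he], rfl⟩⟩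

lemma exists_sub_smul_mem_Jphi (hcomm : commutantSet D = D) {φ : characterSpace ℂ D}
    (hJ : Jphi D φ = (↑) '' {d : D | φ d = 0}) {e : D} (he : φ e = 1) {a : A}
    (ha : a ∈ commutantSet D) : ∃ c : ℂ, a - c • (e : A) ∈ Jphi D φ := by
  rw [hcomm] at ha
  rw [hJ]
  exact ⟨φ ⟨a, ha⟩, ⟨a, ha⟩ - φ ⟨a, ha⟩ • e, by simp [he], rfl⟩

end Jphi

theorem stmt16_general {A : Type u} [NonUnitalCStarAlgebra A]
    (D : NonUnitalStarSubalgebra ℂ A) (hDc : IsClosed (D : Set A))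
    (hab : ∀ a ∈ D, ∀ b ∈ D, a * b = b * a)
    -- D is maximal abelian
    (hmax : ∀ E : NonUnitalStarSubalgebra ℂ A, IsClosed (E : Set A) →
      (∀ a ∈ E, ∀ b ∈ E, a * b = b * a) → D ≤ E → D = E)
    (hau : HasApproxUnit D) :
    -- D is weakly Cartan
    IsWeaklyCartan D ∧
    -- the relative commutant D' equals D
    commutantSet D = (D : Set A) ∧
    -- for each character φ, J_φ = ker φ
    (∀ φ : ↥(characterSpace ℂ D), Jphi D φ = (fun d : D => (d : A)) '' {d : D | φ.1 d = 0}) ∧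
    -- the quotient D'/J_φ is unital and isomorphic to ℂ
    (∀ φ : ↥(characterSpace ℂ D), ∃ e ∈ commutantSet D, IsUnitMod D e (Jphi D φ) ∧
      ∀ a ∈ commutantSet D, ∃ c : ℂ, a - c • e ∈ Jphi D φ) ∧
    -- units can be chosen locally constantly from D
    (∀ φ : ↥(characterSpace ℂ D), ∃ d : D, ∃ U : Set ↥(characterSpace ℂ D),
      IsOpen U ∧ φ ∈ U ∧ ∀ ψ ∈ U, ψ.1 d = 1) := by
  have hcomm := commutantSet_eq hab hmax
  have hJ (φ : characterSpace ℂ D) : Jphi D φ = (↑) '' {d : D | φ d = 0} :=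
    (Jphi_subset_image_ker hDc hcomm φ).antisymm (image_ker_subset_Jphi hab hau φ)
  have hunit (φ : characterSpace ℂ D) : ∃ e ∈ commutantSet D, IsUnitMod D e (Jphi D φ) ∧
      ∀ a ∈ commutantSet D, ∃ c : ℂ, a - c • e ∈ Jphi D φ := by
    obtain ⟨e, he⟩ := CharacterSpace.exists_apply_eq_one φ
    exact ⟨e, hcomm ▸ e.2, isUnitMod_of_apply_eq_one hcomm (hJ φ) he,
      fun a ha => exists_sub_smul_mem_Jphi hcomm (hJ φ) he ha⟩
  have hloc (φ : characterSpace ℂ D) : ∃ d : D, ∃ U : Set (characterSpace ℂ D),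
      IsOpen U ∧ φ ∈ U ∧ ∀ ψ ∈ U, ψ.1 d = 1 := by
    obtain ⟨d, hd⟩ := CharacterSpace.exists_eventually_apply_eq_one φ
    obtain ⟨U, hdU, hU, hφU⟩ := eventually_nhds_iff.1 hd
    exact ⟨d, U, hU, hφU, hdU⟩
  refine ⟨⟨hab, hau, fun φ => ?_, fun φ => ?_⟩, hcomm, hJ, hunit, hloc⟩
  · obtain ⟨e, he, heJ, -⟩ := hunit φ
    exact ⟨e, he, heJ⟩
  · obtain ⟨d, U, hU, hφU, hdU⟩ := hloc φ
    exact ⟨d, U, hU, hφU, fun ψ hψ => isUnitMod_of_apply_eq_one hcomm (hJ ψ) (hdU ψ hψ)⟩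

theorem stmt16 {A : Type u} [NonUnitalCStarAlgebra A] [TopologicalSpace.SeparableSpace A]
    (D : NonUnitalStarSubalgebra ℂ A) (hDc : IsClosed (D : Set A))
    (hab : ∀ a ∈ D, ∀ b ∈ D, a * b = b * a)
    -- D is maximal abelian
    (hmax : ∀ E : NonUnitalStarSubalgebra ℂ A, IsClosed (E : Set A) →
      (∀ a ∈ E, ∀ b ∈ E, a * b = b * a) → D ≤ E → D = E)
    (hau : HasApproxUnit D) :
    -- D is weakly Cartan
    IsWeaklyCartan D ∧
    -- the relative commutant D' equals D
    commutantSet D = (D : Set A) ∧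
    -- for each character φ, J_φ = ker φ
    (∀ φ : ↥(characterSpace ℂ D), Jphi D φ = (fun d : D => (d : A)) '' {d : D | φ.1 d = 0}) ∧
    -- the quotient D'/J_φ is unital and isomorphic to ℂ
    (∀ φ : ↥(characterSpace ℂ D), ∃ e ∈ commutantSet D, IsUnitMod D e (Jphi D φ) ∧
      ∀ a ∈ commutantSet D, ∃ c : ℂ, a - c • e ∈ Jphi D φ) ∧
    -- units can be chosen locally constantly from D
    (∀ φ : ↥(characterSpace ℂ D), ∃ d : D, ∃ U : Set ↥(characterSpace ℂ D),
      IsOpen U ∧ φ ∈ U ∧ ∀ ψ ∈ U, ψ.1 d = 1) :=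
  stmt16_general D hDc hab hmax hau
end
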